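/- arXiv:1709.07656 — 6 statements merged into one kernel-verified Lean document; each statement's English description precedes it below -/
import Mathlib

section
/- Let $L, m > 0$, let $a, b \in C^1([-L,L])$ be positive, and let $G \in C^{1,1}_{loc}(\mathbb{R})$ with $G \ge G(-m) = G(m)$ on $\mathbb{R}$. Suppose there exists $x_0 \in [-L,L]$ such that $(ab)' \le 0$ on $(-L, x_0]$ and $(ab)' \ge 0$ on $[x_0, L)$. Then every solution $u \in C^2$ of $-(a u')' = -b G'(u)$ on $(-L,L)$ with $u(L) = -u(-L) = m$ satisfies $u'(x) > 0$ for all $x \in [-L,L]$; in particular $u$ is strictly increasing. -/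
/-!
The energy `E = (a u')² / 2 - a b (G(u) - G(m))` satisfies `E' = -(a b)' (G(u) - G(m))`, so it
increases up to `x₀` and decreases afterwards; hence `E ≥ min (E (-L)) (E L)`. At `±L` we have
`G(u) = G(m)`, so `E (±L) = (a u')² / 2`, which is positive: if `u'` vanished at an endpoint,
`(u, a u')` would meet the rest point `(±m, 0)` of the first-order system (`G'(±m) = 0` since
`±m` minimizes `G`), and uniqueness for that Lipschitz system would force `u ≡ ±m`. Thus `E > 0`
on `[-L, L]`, while `E ≤ 0` wherever `u' = 0`; so `u'` never vanishes, and it is positive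
somewhere by the mean value theorem since `u(L) > u(-L)`.
-/

open Set Filter Topology
open scoped NNReal

theorem hasDerivWithinAt_Icc_of_hasDerivAt_Ioo {E : Type*} [NormedAddCommGroup E] [NormedSpace ℝ E]
    {f f' : ℝ → E} {a b x : ℝ} (hab : a < b) (hf : ContinuousOn f (Icc a b))
    (hf' : ContinuousOn f' (Icc a b)) (hderiv : ∀ y ∈ Ioo a b, HasDerivAt f (f' y) y)
    (hx : x ∈ Icc a b) : HasDerivWithinAt f (f' x) (Icc a b) x := by
  have hdiff : DifferentiableOn ℝ f (Ioo a b) := fun y hy =>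
    (hderiv y hy).differentiableAt.differentiableWithinAt
  have hlim : Tendsto (deriv f) (𝓝[Ioo a b] x) (𝓝 (f' x)) :=
    ((hf' x hx).mono Ioo_subset_Icc_self).congr' <|
      eventually_nhdsWithin_of_forall fun y hy => (hderiv y hy).deriv.symm
  rcases hx.1.eq_or_lt with rfl | hax
  · rw [nhdsWithin_Ioo_eq_nhdsGT hab] at hlim
    exact (hasDerivWithinAt_Ici_of_tendsto_deriv hdiff ((hf _ hx).mono Ioo_subset_Icc_self)
      (Ioo_mem_nhdsGT hab) hlim).mono Icc_subset_Ici_self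
  rcases hx.2.eq_or_lt with rfl | hxb
  · rw [nhdsWithin_Ioo_eq_nhdsLT hab] at hlim
    exact (hasDerivWithinAt_Iic_of_tendsto_deriv hdiff ((hf _ hx).mono Ioo_subset_Icc_self)
      (Ioo_mem_nhdsLT hab) hlim).mono Icc_subset_Iic_self
  · exact (hderiv x ⟨hax, hxb⟩).hasDerivWithinAt

theorem ODE_solution_unique_of_mem_Icc_of_hasDerivWithinAt {E : Type*} [NormedAddCommGroup E]
    [NormedSpace ℝ E] {v : ℝ → E → E} {s : ℝ → Set E} {K : ℝ≥0} {f g : ℝ → E} {a b t₀ : ℝ}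
    (hv : ∀ t ∈ Icc a b, LipschitzOnWith K (v t) (s t)) (ht₀ : t₀ ∈ Icc a b)
    (hf : ∀ t ∈ Icc a b, HasDerivWithinAt f (v t (f t)) (Icc a b) t)
    (hfs : ∀ t ∈ Icc a b, f t ∈ s t)
    (hg : ∀ t ∈ Icc a b, HasDerivWithinAt g (v t (g t)) (Icc a b) t)
    (hgs : ∀ t ∈ Icc a b, g t ∈ s t) (heq : f t₀ = g t₀) :
    EqOn f g (Icc a b) := by
  have hcont {φ : ℝ → E} (hφ : ∀ t ∈ Icc a b, HasDerivWithinAt φ (v t (φ t)) (Icc a b) t)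
      {c d : ℝ} (hcd : Icc c d ⊆ Icc a b) : ContinuousOn φ (Icc c d) :=
    fun t ht => ((hφ t (hcd ht)).continuousWithinAt).mono hcd
  have hleft {φ : ℝ → E} (hφ : ∀ t ∈ Icc a b, HasDerivWithinAt φ (v t (φ t)) (Icc a b) t) :
      ∀ t ∈ Ioc a t₀, HasDerivWithinAt φ (v t (φ t)) (Iic t) t := fun t ht =>
    have ht' : t ∈ Ioc a b := ⟨ht.1, ht.2.trans ht₀.2⟩
    (hφ t (Ioc_subset_Icc_self ht')).mono_of_mem_nhdsWithin (Icc_mem_nhdsLE_of_mem ht')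
  have hright {φ : ℝ → E} (hφ : ∀ t ∈ Icc a b, HasDerivWithinAt φ (v t (φ t)) (Icc a b) t) :
      ∀ t ∈ Ico t₀ b, HasDerivWithinAt φ (v t (φ t)) (Ici t) t := fun t ht =>
    have ht' : t ∈ Ico a b := ⟨ht₀.1.trans ht.1, ht.2⟩
    (hφ t (Ico_subset_Icc_self ht')).mono_of_mem_nhdsWithin (Icc_mem_nhdsGE_of_mem ht')
  have hsub₁ : Icc a t₀ ⊆ Icc a b := Icc_subset_Icc_right ht₀.2
  have hsub₂ : Icc t₀ b ⊆ Icc a b := Icc_subset_Icc_left ht₀.1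
  rw [← Icc_union_Icc_eq_Icc ht₀.1 ht₀.2]
  refine EqOn.union ?_ ?_
  · exact ODE_solution_unique_of_mem_Icc_left (fun t ht => hv t (hsub₁ (Ioc_subset_Icc_self ht)))
      (hcont hf hsub₁) (hleft hf) (fun t ht => hfs t (hsub₁ (Ioc_subset_Icc_self ht)))
      (hcont hg hsub₁) (hleft hg) (fun t ht => hgs t (hsub₁ (Ioc_subset_Icc_self ht))) heq
  · exact ODE_solution_unique_of_mem_Icc_right (fun t ht => hv t (hsub₂ (Ico_subset_Icc_self ht)))
      (hcont hf hsub₂) (hright hf) (fun t ht => hfs t (hsub₂ (Ico_subset_Icc_self ht)))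
      (hcont hg hsub₂) (hright hg) (fun t ht => hgs t (hsub₂ (Ico_subset_Icc_self ht))) heq

/-- The first-order system for `(u, a u')` equivalent to `(a u')' = b g(u)`. -/
noncomputable def divergenceFormField (a b g : ℝ → ℝ) (t : ℝ) (p : ℝ × ℝ) : ℝ × ℝ :=
  ((a t)⁻¹ * p.2, b t * g p.1)

theorem exists_lipschitzOnWith_divergenceFormField {a b g : ℝ → ℝ} {I S : Set ℝ}
    (hI : IsCompact I) (ha : ContinuousOn a I) (ha₀ : ∀ t ∈ I, a t ≠ 0) (hb : ContinuousOn b I)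
    (hS : IsCompact S) (hg : LocallyLipschitz g) :
    ∃ K, ∀ t ∈ I, LipschitzOnWith K (divergenceFormField a b g t) (S ×ˢ univ) := by
  obtain ⟨Kg, hKg⟩ := hg.locallyLipschitzOn.exists_lipschitzOnWith_of_compact hS
  obtain ⟨A, hA⟩ := (hI.image_of_continuousOn (ha.inv₀ ha₀).nnnorm).bddAbove
  obtain ⟨B, hB⟩ := (hI.image_of_continuousOn hb.nnnorm).bddAbove
  refine ⟨max A (B * Kg), fun t ht => LipschitzOnWith.prodMk ?_ ?_⟩
  · have h := (lipschitzWith_smul (a t)⁻¹).comp (LipschitzWith.prod_snd (α := ℝ) (β := ℝ))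
    rw [mul_one] at h
    exact (h.lipschitzOnWith).weaken (hA ⟨t, ht, rfl⟩)
  · have hfst : LipschitzOnWith (Kg * 1) (g ∘ Prod.fst) (S ×ˢ (univ : Set ℝ)) :=
      hKg.comp LipschitzWith.prod_fst.lipschitzOnWith fun _ hp => (mem_prod.1 hp).1
    rw [mul_one] at hfst
    exact ((lipschitzWith_smul (b t)).comp_lipschitzOnWith hfst).weaken
      (mul_le_mul_left (hB ⟨t, ht, rfl⟩) _)

theorem eqOn_const_of_eq_of_deriv_eq_zero {a b g u u' : ℝ → ℝ} {s t p x₁ : ℝ} (hst : s < t)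
    (ha : ContinuousOn a (Icc s t)) (ha₀ : ∀ x ∈ Icc s t, a x ≠ 0) (hb : ContinuousOn b (Icc s t))
    (hg : LocallyLipschitz g) (hgp : g p = 0)
    (hu : ∀ x ∈ Icc s t, HasDerivWithinAt u (u' x) (Icc s t) x) (hu' : ContinuousOn u' (Icc s t))
    (hode : ∀ x ∈ Ioo s t, HasDerivAt (fun y => a y * u' y) (b x * g (u x)) x)
    (hx₁ : x₁ ∈ Icc s t) (hup : u x₁ = p) (hu'0 : u' x₁ = 0) :
    ∀ x ∈ Icc s t, u x = p := by
  have hucont : ContinuousOn u (Icc s t) := fun x hx => (hu x hx).continuousWithinAt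
  have hw : ∀ x ∈ Icc s t, HasDerivWithinAt (fun y => a y * u' y) (b x * g (u x)) (Icc s t) x :=
    fun x hx => hasDerivWithinAt_Icc_of_hasDerivAt_Ioo hst (ha.mul hu')
      (hb.mul (hg.continuous.comp_continuousOn hucont)) hode hx
  obtain ⟨K, hK⟩ := exists_lipschitzOnWith_divergenceFormField isCompact_Icc ha ha₀ hb
    ((isCompact_Icc.image_of_continuousOn hucont).insert p) hg
  have hsol := ODE_solution_unique_of_mem_Icc_of_hasDerivWithinAt hK hx₁
    (f := fun x => (u x, a x * u' x)) (g := fun _ => (p, 0))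
    (fun x hx => ((hu x hx).prodMk (hw x hx)).congr_deriv (by simp [divergenceFormField, ha₀ x hx]))
    (fun x hx => ⟨mem_insert_of_mem _ (mem_image_of_mem u hx), mem_univ _⟩)
    (fun x _ => (hasDerivWithinAt_const x _ _).congr_deriv
      (by simp [divergenceFormField, hgp]; rfl))
    (fun _ _ => ⟨mem_insert _ _, mem_univ _⟩) (by simp [hup, hu'0])
  exact fun x hx => congrArg Prod.fst (hsol hx)

theorem min_le_of_hasDerivAt_nonneg_of_nonpos {f f' : ℝ → ℝ} {a b c x : ℝ} (hc : c ∈ Icc a b)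
    (hf : ContinuousOn f (Icc a b)) (hf' : ∀ y ∈ Ioo a b, HasDerivAt f (f' y) y)
    (hinc : ∀ y ∈ Ioo a c, 0 ≤ f' y) (hdec : ∀ y ∈ Ioo c b, f' y ≤ 0) (hx : x ∈ Icc a b) :
    min (f a) (f b) ≤ f x := by
  rcases le_total x c with hxc | hcx
  · have hmono : MonotoneOn f (Icc a c) := by
      refine monotoneOn_of_hasDerivWithinAt_nonneg (f' := f') (convex_Icc a c)
        (hf.mono (Icc_subset_Icc_right hc.2)) (fun y hy => ?_) (fun y hy => ?_)
      · rw [interior_Icc] at hy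
        exact (hf' y ⟨hy.1, hy.2.trans_le hc.2⟩).hasDerivWithinAt
      · exact hinc y (by rwa [interior_Icc] at hy)
    exact min_le_of_left_le (hmono (left_mem_Icc.2 (hx.1.trans hxc)) ⟨hx.1, hxc⟩ hx.1)
  · have hanti : AntitoneOn f (Icc c b) := by
      refine antitoneOn_of_hasDerivWithinAt_nonpos (f' := f') (convex_Icc c b)
        (hf.mono (Icc_subset_Icc_left hc.1)) (fun y hy => ?_) (fun y hy => ?_)
      · rw [interior_Icc] at hy
        exact (hf' y ⟨hc.1.trans_lt hy.1, hy.2⟩).hasDerivWithinAt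
      · exact hdec y (by rwa [interior_Icc] at hy)
    exact min_le_of_right_le (hanti ⟨hcx, hx.2⟩ (right_mem_Icc.2 (hcx.trans hx.2)) hx.2)

noncomputable def energy (a b G u u' : ℝ → ℝ) (x : ℝ) : ℝ :=
  (a x * u' x) ^ 2 / 2 - a x * b x * G (u x)

theorem hasDerivAt_energy {a b G G' u u' : ℝ → ℝ} {ab' x : ℝ}
    (hab : HasDerivAt (fun y => a y * b y) ab' x) (hu : HasDerivAt u (u' x) x)
    (hG : HasDerivAt G (G' (u x)) (u x))
    (hode : HasDerivAt (fun y => a y * u' y) (b x * G' (u x)) x) :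
    HasDerivAt (energy a b G u u') (-(ab' * G (u x))) x := by
  refine (((hode.fun_pow 2).div_const 2).fun_sub (hab.fun_mul (hG.comp x hu))).congr_deriv ?_
  simp only [Function.comp_apply]
  ring

theorem deriv_ne_zero_of_ne_zero_at_endpoints {a b ab' G G' u u' : ℝ → ℝ} {s t x₀ c : ℝ}
    (hx₀ : x₀ ∈ Icc s t) (ha : ContinuousOn a (Icc s t)) (hb : ContinuousOn b (Icc s t))
    (hapos : ∀ x ∈ Icc s t, 0 < a x) (hbpos : ∀ x ∈ Icc s t, 0 < b x)
    (hab : ∀ x ∈ Ioo s t, HasDerivAt (fun y => a y * b y) (ab' x) x)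
    (hab₁ : ∀ x ∈ Ioo s x₀, ab' x ≤ 0) (hab₂ : ∀ x ∈ Ioo x₀ t, 0 ≤ ab' x)
    (hG : ∀ r, HasDerivAt G (G' r) r) (hGge : ∀ r, c ≤ G r)
    (hu : ∀ x ∈ Ioo s t, HasDerivAt u (u' x) x) (hucont : ContinuousOn u (Icc s t))
    (hu'c : ContinuousOn u' (Icc s t))
    (hode : ∀ x ∈ Ioo s t, HasDerivAt (fun y => a y * u' y) (b x * G' (u x)) x)
    (hGs : G (u s) = c) (hGt : G (u t) = c) (hu's : u' s ≠ 0) (hu't : u' t ≠ 0) :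
    ∀ x ∈ Icc s t, u' x ≠ 0 := by
  set E := energy a b (fun r => G r - c) u u'
  have hE : ∀ x ∈ Ioo s t, HasDerivAt E (-(ab' x * (G (u x) - c))) x := fun x hx =>
    hasDerivAt_energy (hab x hx) (hu x hx) ((hG (u x)).sub_const c) (hode x hx)
  have hEcont : ContinuousOn E (Icc s t) := by
    have hGc : Continuous G := continuous_iff_continuousAt.2 fun r => (hG r).continuousAt
    unfold E energy
    fun_prop
  have hEmin : ∀ x ∈ Icc s t, min (E s) (E t) ≤ E x :=
    fun x hx => min_le_of_hasDerivAt_nonneg_of_nonpos hx₀ hEcont hE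
      (fun y hy => neg_nonneg.2 <|
        mul_nonpos_of_nonpos_of_nonneg (hab₁ y hy) (sub_nonneg.2 (hGge _)))
      (fun y hy => neg_nonpos.2 <| mul_nonneg (hab₂ y hy) (sub_nonneg.2 (hGge _))) hx
  have hE_end : ∀ x ∈ Icc s t, G (u x) = c → u' x ≠ 0 → 0 < E x := fun x hx hGu h0 => by
    have := mul_ne_zero (hapos x hx).ne' h0
    simp only [E, energy, hGu, sub_self, mul_zero, sub_zero]
    positivity
  intro x hx h0
  have hst : s ≤ t := hx.1.trans hx.2
  have hEx : 0 < E x := (lt_min (hE_end s (left_mem_Icc.2 hst) hGs hu's)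
    (hE_end t (right_mem_Icc.2 hst) hGt hu't)).trans_le (hEmin x hx)
  have : 0 ≤ a x * b x * (G (u x) - c) :=
    mul_nonneg (mul_pos (hapos x hx) (hbpos x hx)).le (sub_nonneg.2 (hGge _))
  simp only [E, energy, h0, mul_zero] at hEx
  linarith

/-- Theorem 1.7 of the paper, monotonicity under assumption (i).
If `(ab)' ≤ 0` on `(-L, x₀]`, `(ab)' ≥ 0` on `[x₀, L)`, and `G ≥ G(-m) = G(m)` on `ℝ`,
then every solution of `-(a u')' = -b G'(u)` on `(-L, L)` with `u(±L) = ±m` satisfies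
`u' > 0` on `[-L, L]`; in particular `u` is strictly increasing. -/
theorem stmt_6 (L m x₀ : ℝ) (hL : 0 < L) (hm : 0 < m) (hx₀ : x₀ ∈ Icc (-L) L)
    (a b ab' G G' u u' : ℝ → ℝ)
    (haC1 : ContDiffOn ℝ 1 a (Icc (-L) L)) (hbC1 : ContDiffOn ℝ 1 b (Icc (-L) L))
    (hapos : ∀ x ∈ Icc (-L) L, 0 < a x) (hbpos : ∀ x ∈ Icc (-L) L, 0 < b x)
    (hab : ∀ x ∈ Icc (-L) L,
      HasDerivWithinAt (fun y => a y * b y) (ab' x) (Icc (-L) L) x)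
    (hab₁ : ∀ x ∈ Ioc (-L) x₀, ab' x ≤ 0) (hab₂ : ∀ x ∈ Ico x₀ L, 0 ≤ ab' x)
    (hG : ∀ s, HasDerivAt G (G' s) s) (hG'lip : LocallyLipschitz G')
    (hGge : ∀ s : ℝ, G m ≤ G s) (hGsym : G (-m) = G m)
    (hu : ∀ x ∈ Icc (-L) L, HasDerivWithinAt u (u' x) (Icc (-L) L) x)
    (hu'c : ContinuousOn u' (Icc (-L) L))
    (hode : ∀ x ∈ Ioo (-L) L, HasDerivAt (fun y => a y * u' y) (b x * G' (u x)) x)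
    (huL : u L = m) (humL : u (-L) = -m) :
    (∀ x ∈ Icc (-L) L, 0 < u' x) ∧ StrictMonoOn u (Icc (-L) L) := by
  have hLL : -L < L := by linarith
  have hmL : -L ∈ Icc (-L) L := left_mem_Icc.2 hLL.le
  have hL' : L ∈ Icc (-L) L := right_mem_Icc.2 hLL.le
  have hucont : ContinuousOn u (Icc (-L) L) := fun x hx => (hu x hx).continuousWithinAt
  have hu_int : ∀ x ∈ Ioo (-L) L, HasDerivAt u (u' x) x := fun x hx =>
    (hu x (Ioo_subset_Icc_self hx)).hasDerivAt (Icc_mem_nhds hx.1 hx.2)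
  have hG'crit : ∀ s, G s = G m → G' s = 0 := fun s hs =>
    IsLocalMin.hasDerivAt_eq_zero (Eventually.of_forall fun r => hs ▸ hGge r) (hG s)
  have hrest {x₁ p : ℝ} (hx₁ : x₁ ∈ Icc (-L) L) (hp : G p = G m) (hup : u x₁ = p)
      (h0 : u' x₁ = 0) : ∀ x ∈ Icc (-L) L, u x = p :=
    eqOn_const_of_eq_of_deriv_eq_zero hLL haC1.continuousOn (fun x hx => (hapos x hx).ne')
      hbC1.continuousOn hG'lip (hG'crit p hp) hu hu'c hode hx₁ hup h0
  have hu'ne : ∀ x ∈ Icc (-L) L, u' x ≠ 0 :=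
    deriv_ne_zero_of_ne_zero_at_endpoints hx₀ haC1.continuousOn hbC1.continuousOn hapos hbpos
      (fun x hx => (hab x (Ioo_subset_Icc_self hx)).hasDerivAt (Icc_mem_nhds hx.1 hx.2))
      (fun x hx => hab₁ x ⟨hx.1, hx.2.le⟩) (fun x hx => hab₂ x ⟨hx.1.le, hx.2⟩) hG hGge
      hu_int hucont hu'c hode (by rw [humL, hGsym]) (by rw [huL])
      (fun h0 => by linarith [hrest hmL hGsym humL h0 L hL'])
      (fun h0 => by linarith [hrest hL' rfl huL h0 (-L) hmL])
  obtain ⟨c, hc, hslope⟩ := exists_hasDerivAt_eq_slope u u' hLL hucont hu_int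
  have hu'c_pos : 0 < u' c := by
    rw [hslope, huL, humL]
    exact div_pos (by linarith) (by linarith)
  have hu'pos : ∀ x ∈ Icc (-L) L, 0 < u' x := fun x hx =>
    isPreconnected_Icc.lt_of_ne hu'c hu'ne ⟨c, Ioo_subset_Icc_self hc, hu'c_pos⟩ hx
  refine ⟨hu'pos, strictMonoOn_of_hasDerivWithinAt_pos (convex_Icc _ _) hucont
    (fun x hx => ?_) (fun x hx => hu'pos x (interior_subset hx))⟩
  rw [interior_Icc] at hx ⊢
  exact (hu_int x hx).hasDerivWithinAt
end

section
/- Let $L, m > 0$, let $a, b$ be positive even $C^1([-L,L])$ functions, and let $G$ be an even $C^{1,1}_{loc}(\mathbb{R})$ function with $(ab)' \ge 0$ on $(0,L)$, $G \ge G(m)$ on $(0,\infty)$, and $G' \le 0$ on $(0,m)$. Then the boundary value problem $-(a u')' = -b G'(u)$ on $(-L,L)$, $u(L) = -u(-L) = m$, admits at most one solution; moreover any solution is odd (i.e. $u(-x) = -u(x)$) and strictly increasing. -/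
open Set

/-- A (classical) solution of the boundary value problem
`-(a u')' = -b G'(u)` on `(-L, L)`, `u(L) = -u(-L) = m`:
`u ∈ C¹([-L,L])` with `(a u')' = b G'(u)` pointwise in `(-L, L)`. -/
def IsSolutionBVP (L m : ℝ) (a b G' : ℝ → ℝ) (u : ℝ → ℝ) : Prop :=
  ∃ u' : ℝ → ℝ,
    (∀ x ∈ Set.Icc (-L) L, HasDerivWithinAt u (u' x) (Set.Icc (-L) L) x) ∧
    ContinuousOn u' (Set.Icc (-L) L) ∧
    (∀ x ∈ Set.Ioo (-L) L, HasDerivAt (fun y => a y * u' y) (b x * G' (u x)) x) ∧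
    u (-L) = -m ∧ u L = m

/-!
Along a solution the energy `(a u')² / (a b) - 2 G(u)` is monotone on each half of `[-L, L]`, so
at a critical point `G(u) ≤ G(m)`: `u` sits at a minimum of `G`, where `G' = 0`, and by uniqueness
for the Cauchy problem `u` would be constant. Hence `u' > 0`, and `u` can be parametrized by its
height `s ∈ [-m, m]`: the inverse `X` and the flux `P = (a u') ∘ X` satisfy `X' = a(X) / P` and
`(P²)' = 2 (a b)(X) G'(s)`. When `G' ≤ 0` and `a b` is larger along the profile that is ahead, of
two profiles with the same endpoints the one leaving with the larger flux is slower, stays behind,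
and never catches up; so both leave with the same flux. For `u` against its reflection
`-u(-x)` on `[-m, m]` this gives `u'(-L) = u'(L)`, hence oddness by Cauchy uniqueness; for two odd
solutions on `[0, m]` it gives `u₁'(0) = u₂'(0)`, hence uniqueness.
-/

open Filter Topology

section ODE

variable {E : Type*} [NormedAddCommGroup E] [NormedSpace ℝ E]
  {v : ℝ → E → E} {s : ℝ → Set E} {K : NNReal} {f g : ℝ → E} {a b t₀ : ℝ}

theorem ODE_solution_eqOn_Icc_of_left
    (hv : ∀ t ∈ Ioo a b, LipschitzOnWith K (v t) (s t))
    (hf : ContinuousOn f (Icc a b)) (hf' : ∀ t ∈ Ioo a b, HasDerivAt f (v t (f t)) t)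
    (hfs : ∀ t ∈ Ioo a b, f t ∈ s t)
    (hg : ContinuousOn g (Icc a b)) (hg' : ∀ t ∈ Ioo a b, HasDerivAt g (v t (g t)) t)
    (hgs : ∀ t ∈ Ioo a b, g t ∈ s t) (ha : f a = g a) :
    EqOn f g (Icc a b) := by
  intro t ht
  rcases eq_or_lt_of_le ht.1 with rfl | hat
  · exact ha
  -- Grönwall on `[c, t]` for every `c ∈ (a, t)`, then let `c → a`.
  have hbound : ∀ c ∈ Ioo a t,
      dist (f t) (g t) ≤ dist (f c) (g c) * Real.exp (K * (t - c)) := by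
    intro c hc
    have hsub : Icc c t ⊆ Icc a b := Icc_subset_Icc hc.1.le ht.2
    have hsub' : Ico c t ⊆ Ioo a b := fun x hx => ⟨hc.1.trans_le hx.1, hx.2.trans_le ht.2⟩
    exact dist_le_of_trajectories_ODE_of_mem (fun x hx => hv x (hsub' hx)) (hf.mono hsub)
      (fun x hx => (hf' x (hsub' hx)).hasDerivWithinAt) (fun x hx => hfs x (hsub' hx))
      (hg.mono hsub) (fun x hx => (hg' x (hsub' hx)).hasDerivWithinAt)
      (fun x hx => hgs x (hsub' hx)) le_rfl t ⟨hc.2.le, le_rfl⟩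
  have hle : 𝓝[>] a ≤ 𝓝[Icc a b] a := by
    rw [← nhdsWithin_Ioo_eq_nhdsGT (hat.trans_le ht.2)]
    exact nhdsWithin_mono _ Ioo_subset_Icc_self
  have haI : a ∈ Icc a b := ⟨le_rfl, hat.le.trans ht.2⟩
  have hlim : Tendsto (fun c => dist (f c) (g c) * Real.exp (K * (t - c))) (𝓝[>] a)
      (𝓝 (dist (f a) (g a) * Real.exp (K * (t - a)))) :=
    (((hf a haI).tendsto.mono_left hle).dist ((hg a haI).tendsto.mono_left hle)).mul
      ((Real.continuous_exp.comp (by fun_prop)).tendsto a |>.mono_left nhdsWithin_le_nhds)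
  rw [ha, dist_self, zero_mul] at hlim
  exact dist_le_zero.1 <| ge_of_tendsto hlim <|
    Filter.mem_of_superset (Ioo_mem_nhdsGT hat) fun c hc => hbound c hc

theorem ODE_solution_eqOn_Icc_of_right
    (hv : ∀ t ∈ Ioo a b, LipschitzOnWith K (v t) (s t))
    (hf : ContinuousOn f (Icc a b)) (hf' : ∀ t ∈ Ioo a b, HasDerivAt f (v t (f t)) t)
    (hfs : ∀ t ∈ Ioo a b, f t ∈ s t)
    (hg : ContinuousOn g (Icc a b)) (hg' : ∀ t ∈ Ioo a b, HasDerivAt g (v t (g t)) t)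
    (hgs : ∀ t ∈ Ioo a b, g t ∈ s t) (hb : f b = g b) :
    EqOn f g (Icc a b) := by
  have hIcc : MapsTo Neg.neg (Icc (-b) (-a)) (Icc a b) :=
    fun t ht => ⟨le_neg.1 ht.2, neg_le.1 ht.1⟩
  have hIoo : MapsTo Neg.neg (Ioo (-b) (-a)) (Ioo a b) :=
    fun t ht => ⟨lt_neg.1 ht.2, neg_lt.1 ht.1⟩
  have hrev : EqOn (f ∘ Neg.neg) (g ∘ Neg.neg) (Icc (-b) (-a)) := by
    refine ODE_solution_eqOn_Icc_of_left (v := fun t x => -v (-t) x) (s := fun t => s (-t))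
      (fun t ht => (hv _ (hIoo ht)).neg) (hf.comp continuousOn_neg hIcc) (fun t ht => ?_)
      (fun t ht => hfs _ (hIoo ht)) (hg.comp continuousOn_neg hIcc) (fun t ht => ?_)
      (fun t ht => hgs _ (hIoo ht)) (by simp [hb])
    · simpa using (hf' _ (hIoo ht)).scomp t (hasDerivAt_neg t)
    · simpa using (hg' _ (hIoo ht)).scomp t (hasDerivAt_neg t)
  intro t ht
  simpa using hrev (show -t ∈ Icc (-b) (-a) from ⟨neg_le_neg ht.2, neg_le_neg ht.1⟩)

theorem ODE_solution_eqOn_Icc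
    (hv : ∀ t ∈ Ioo a b, LipschitzOnWith K (v t) (s t)) (ht₀ : t₀ ∈ Icc a b)
    (hf : ContinuousOn f (Icc a b)) (hf' : ∀ t ∈ Ioo a b, HasDerivAt f (v t (f t)) t)
    (hfs : ∀ t ∈ Ioo a b, f t ∈ s t)
    (hg : ContinuousOn g (Icc a b)) (hg' : ∀ t ∈ Ioo a b, HasDerivAt g (v t (g t)) t)
    (hgs : ∀ t ∈ Ioo a b, g t ∈ s t) (heq : f t₀ = g t₀) :
    EqOn f g (Icc a b) := by
  rw [← Icc_union_Icc_eq_Icc ht₀.1 ht₀.2]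
  have hl : Ioo a t₀ ⊆ Ioo a b := Ioo_subset_Ioo_right ht₀.2
  have hr : Ioo t₀ b ⊆ Ioo a b := Ioo_subset_Ioo_left ht₀.1
  refine EqOn.union ?_ ?_
  · exact ODE_solution_eqOn_Icc_of_right (fun t ht => hv t (hl ht))
      (hf.mono (Icc_subset_Icc_right ht₀.2)) (fun t ht => hf' t (hl ht)) (fun t ht => hfs t (hl ht))
      (hg.mono (Icc_subset_Icc_right ht₀.2)) (fun t ht => hg' t (hl ht)) (fun t ht => hgs t (hl ht))
      heq
  · exact ODE_solution_eqOn_Icc_of_left (fun t ht => hv t (hr ht))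
      (hf.mono (Icc_subset_Icc_left ht₀.1)) (fun t ht => hf' t (hr ht)) (fun t ht => hfs t (hr ht))
      (hg.mono (Icc_subset_Icc_left ht₀.1)) (fun t ht => hg' t (hr ht)) (fun t ht => hgs t (hr ht))
      heq

end ODE

section Crossing

variable {d Φ : ℝ → ℝ} {α β t : ℝ}

theorem exists_pos_strictMonoOn_of_deriv_pos (hd : ContinuousOn d (Icc α β))
    (hΦ : ContinuousOn Φ (Icc α β)) (hd' : ∀ s ∈ Ioo α β, HasDerivAt d (Φ s) s)
    (ht : t ∈ Icc α β) (hpos : 0 < Φ t) :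
    ∃ ε > 0, StrictMonoOn d (Icc (t - ε) (t + ε) ∩ Icc α β) := by
  obtain ⟨ε, hε, hball⟩ := Metric.mem_nhdsWithin_iff.1 ((hΦ t ht) (Ioi_mem_nhds hpos))
  refine ⟨ε / 2, half_pos hε, ?_⟩
  have hsub : Icc (t - ε / 2) (t + ε / 2) ∩ Icc α β ⊆ Metric.ball t ε ∩ Icc α β :=
    inter_subset_inter_left _ fun s hs => by
      rw [Metric.mem_ball, Real.dist_eq, abs_lt]; constructor <;> linarith [hs.1, hs.2]
  refine strictMonoOn_of_deriv_pos ((convex_Icc _ _).inter (convex_Icc _ _))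
    (hd.mono inter_subset_right) fun s hs => ?_
  rw [interior_inter, interior_Icc, interior_Icc] at hs
  rw [(hd' s hs.2).deriv]
  exact hball (hsub ⟨Ioo_subset_Icc_self hs.1, Ioo_subset_Icc_self hs.2⟩)

theorem false_of_deriv_pos_at_zeros (hαβ : α < β) (hd : ContinuousOn d (Icc α β))
    (hΦ : ContinuousOn Φ (Icc α β)) (hd' : ∀ s ∈ Ioo α β, HasDerivAt d (Φ s) s)
    (hα : d α = 0) (hβ : d β = 0)
    (hzero : ∀ s ∈ Icc α β, d s = 0 → (∀ r ∈ Icc α s, 0 ≤ d r) → 0 < Φ s) : False := by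
  -- `d ≥ 0` propagates along `[α, β]`, and then `d' β > 0` makes `d` negative just before `β`.
  have hnonneg : Icc α β ⊆ {s | 0 ≤ d s} := by
    refine IsClosed.Icc_subset_of_forall_mem_nhdsGT_of_Icc_subset ?_ hα.ge fun s hs hbefore => ?_
    · rw [inter_comm]; exact hd.preimage_isClosed_of_isClosed isClosed_Icc isClosed_Ici
    have hle : 𝓝[>] s ≤ 𝓝[Icc α β] s := by
      rw [← nhdsWithin_Ioo_eq_nhdsGT hs.2]
      exact nhdsWithin_mono _ fun r hr => ⟨hs.1.trans hr.1.le, hr.2.le⟩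
    rcases (show 0 ≤ d s from hbefore ⟨hs.1, le_rfl⟩).eq_or_lt with hs0 | hs0
    · obtain ⟨ε, hε, hmono⟩ := exists_pos_strictMonoOn_of_deriv_pos hd hΦ hd'
        (Ico_subset_Icc_self hs) (hzero s (Ico_subset_Icc_self hs) hs0.symm hbefore)
      filter_upwards [Ioo_mem_nhdsGT (show s < min (s + ε) β by simp [hε, hs.2])] with r hr
      have hr' : r ∈ Icc (s - ε) (s + ε) ∩ Icc α β :=
        ⟨⟨by linarith [hr.1], (hr.2.trans_le (min_le_left _ _)).le⟩,
          hs.1.trans hr.1.le, (hr.2.trans_le (min_le_right _ _)).le⟩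
      have := hmono ⟨⟨by linarith, by linarith⟩, Ico_subset_Icc_self hs⟩ hr' hr.1
      exact (hs0.trans_lt this).le
    · filter_upwards [hle ((hd s (Ico_subset_Icc_self hs)) (Ioi_mem_nhds hs0))] with r hr
      exact le_of_lt hr
  have hβI : β ∈ Icc α β := right_mem_Icc.2 hαβ.le
  obtain ⟨ε, hε, hmono⟩ := exists_pos_strictMonoOn_of_deriv_pos hd hΦ hd' hβI
    (hzero β hβI hβ fun r hr => hnonneg hr)
  set r := max α (β - ε)
  have hr : r ∈ Icc (β - ε) (β + ε) ∩ Icc α β :=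
    ⟨⟨le_max_right _ _, by simp [r]; constructor <;> linarith⟩, le_max_left _ _,
      max_le hαβ.le (by linarith)⟩
  have := hmono hr ⟨⟨by linarith, by linarith⟩, hβI⟩ (max_lt hαβ (by linarith))
  have : 0 ≤ d r := hnonneg hr.2
  linarith

end Crossing

/-- A solution `u` of `(a u')' = b G'(u)` with `u' > 0` seen from its height `s = u x`: `X` is the
inverse of `u` and `P s = a (X s) * u' (X s)` the flux; `w` stands for `a b` and `g` for `G'`. -/
structure IsHeightProfile (a w g : ℝ → ℝ) (s₀ s₁ : ℝ) (X P : ℝ → ℝ) : Prop where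
  continuousOn : ContinuousOn X (Icc s₀ s₁)
  continuousOn_flux : ContinuousOn P (Icc s₀ s₁)
  continuousOn_weight : ContinuousOn (fun s => a (X s)) (Icc s₀ s₁)
  flux_pos : ∀ s ∈ Icc s₀ s₁, 0 < P s
  weight_pos : ∀ s ∈ Icc s₀ s₁, 0 < a (X s)
  hasDerivAt : ∀ s ∈ Ioo s₀ s₁, HasDerivAt X (a (X s) / P s) s
  hasDerivAt_flux_sq : ∀ s ∈ Ioo s₀ s₁, HasDerivAt (fun t => P t ^ 2) (2 * w (X s) * g s) s

namespace IsHeightProfile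

variable {a w g X P X₁ P₁ X₂ P₂ : ℝ → ℝ} {s₀ s₁ : ℝ}

theorem mono (h : IsHeightProfile a w g s₀ s₁ X P) {s₀' s₁' : ℝ} (h₀ : s₀ ≤ s₀') (h₁ : s₁' ≤ s₁) :
    IsHeightProfile a w g s₀' s₁' X P where
  continuousOn := h.continuousOn.mono (Icc_subset_Icc h₀ h₁)
  continuousOn_flux := h.continuousOn_flux.mono (Icc_subset_Icc h₀ h₁)
  continuousOn_weight := h.continuousOn_weight.mono (Icc_subset_Icc h₀ h₁)
  flux_pos s hs := h.flux_pos s (Icc_subset_Icc h₀ h₁ hs)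
  weight_pos s hs := h.weight_pos s (Icc_subset_Icc h₀ h₁ hs)
  hasDerivAt s hs := h.hasDerivAt s (Ioo_subset_Ioo h₀ h₁ hs)
  hasDerivAt_flux_sq s hs := h.hasDerivAt_flux_sq s (Ioo_subset_Ioo h₀ h₁ hs)

theorem reflect (h : IsHeightProfile a w g s₀ s₁ X P) (ha : ∀ x, a (-x) = a x)
    (hw : ∀ x, w (-x) = w x) (hg : ∀ s, g (-s) = -g s) :
    IsHeightProfile a w g (-s₁) (-s₀) (fun s => -X (-s)) (fun s => P (-s)) := by
  have hIcc : MapsTo Neg.neg (Icc (-s₁) (-s₀)) (Icc s₀ s₁) :=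
    fun t ht => ⟨le_neg.1 ht.2, neg_le.1 ht.1⟩
  have hIoo : MapsTo Neg.neg (Ioo (-s₁) (-s₀)) (Ioo s₀ s₁) :=
    fun t ht => ⟨lt_neg.1 ht.2, neg_lt.1 ht.1⟩
  refine ⟨(h.continuousOn.comp continuousOn_neg hIcc).neg,
    h.continuousOn_flux.comp continuousOn_neg hIcc, ?_, fun s hs => h.flux_pos _ (hIcc hs),
    fun s hs => by simpa [ha] using h.weight_pos _ (hIcc hs), fun s hs => ?_, fun s hs => ?_⟩
  · exact (h.continuousOn_weight.comp continuousOn_neg hIcc).congr fun s _ => by simp [ha]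
  · exact ((h.hasDerivAt _ (hIoo hs)).comp s (hasDerivAt_neg s)).neg.congr_deriv (by simp [ha])
  · exact ((h.hasDerivAt_flux_sq _ (hIoo hs)).comp s (hasDerivAt_neg s)).congr_deriv
      (by simp [hw, hg])

/-- The profile leaving with the larger flux is slower, and `hbehind` keeps its flux larger while
it is behind, so it can never catch up. -/
theorem flux_le (h₁ : IsHeightProfile a w g s₀ s₁ X₁ P₁) (h₂ : IsHeightProfile a w g s₀ s₁ X₂ P₂)
    (hs : s₀ < s₁) (hstart : X₁ s₀ = X₂ s₀) (hend : X₁ s₁ = X₂ s₁)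
    (hbehind : ∀ s ∈ Ioo s₀ s₁, X₁ s ≤ X₂ s → w (X₂ s) * g s ≤ w (X₁ s) * g s) :
    P₁ s₀ ≤ P₂ s₀ := by
  by_contra! hlt
  refine false_of_deriv_pos_at_zeros (d := fun s => X₂ s - X₁ s)
    (Φ := fun s => a (X₂ s) / P₂ s - a (X₁ s) / P₁ s) hs
    (h₂.continuousOn.sub h₁.continuousOn)
    ((h₂.continuousOn_weight.div h₂.continuousOn_flux fun s hs => (h₂.flux_pos s hs).ne').sub
      (h₁.continuousOn_weight.div h₁.continuousOn_flux fun s hs => (h₁.flux_pos s hs).ne'))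
    (fun s hs => (h₂.hasDerivAt s hs).sub (h₁.hasDerivAt s hs)) (by simp [hstart])
    (by simp [hend]) fun s hs hd hbefore => ?_
  have hsub : Icc s₀ s ⊆ Icc s₀ s₁ := Icc_subset_Icc_right hs.2
  have hgap : MonotoneOn (fun t => P₁ t ^ 2 - P₂ t ^ 2) (Icc s₀ s) := by
    refine monotoneOn_of_hasDerivWithinAt_nonneg
      (f' := fun t => 2 * g t * (w (X₁ t) - w (X₂ t))) (convex_Icc _ _)
      (((h₁.continuousOn_flux.pow 2).sub (h₂.continuousOn_flux.pow 2)).mono hsub)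
      (fun t ht => ?_) fun t ht => ?_
    · rw [interior_Icc] at ht
      have ht' : t ∈ Ioo s₀ s₁ := ⟨ht.1, ht.2.trans_le hs.2⟩
      exact ((h₁.hasDerivAt_flux_sq t ht').sub (h₂.hasDerivAt_flux_sq t ht')).hasDerivWithinAt
        |>.congr_deriv (by ring)
    · rw [interior_Icc] at ht
      have ht' : t ∈ Ioo s₀ s₁ := ⟨ht.1, ht.2.trans_le hs.2⟩
      have := hbehind t ht' (sub_nonneg.1 (hbefore t (Ioo_subset_Icc_self ht)))
      nlinarith
  have hP : P₂ s < P₁ s := by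
    have hsq := hgap (left_mem_Icc.2 hs.1) (right_mem_Icc.2 hs.1) hs.1
    have := pow_lt_pow_left₀ hlt (h₂.flux_pos s₀ (left_mem_Icc.2 (hs.1.trans hs.2))).le two_ne_zero
    exact lt_of_pow_lt_pow_left₀ 2 (h₁.flux_pos s hs).le (by simp only at hsq; linarith)
  have hX : X₁ s = X₂ s := (sub_eq_zero.1 hd).symm
  simp only [hX, sub_pos]
  exact div_lt_div_of_pos_left (h₂.weight_pos s hs) (h₂.flux_pos s hs) hP

end IsHeightProfile

theorem StrictMonoOn.exists_continuous_inverse {f : ℝ → ℝ} {α β : ℝ} (hαβ : α ≤ β)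
    (hf : ContinuousOn f (Icc α β)) (hmono : StrictMonoOn f (Icc α β)) :
    ∃ g : ℝ → ℝ, Continuous g ∧ Monotone g ∧ (∀ s, g s ∈ Icc α β) ∧
      (∀ s ∈ Icc (f α) (f β), f (g s) = s) ∧ ∀ x ∈ Icc α β, g (f x) = x := by
  have hfαβ : f α ≤ f β := hmono.monotoneOn (left_mem_Icc.2 hαβ) (right_mem_Icc.2 hαβ) hαβ
  let e : Icc α β ≃o Icc (f α) (f β) := (hmono.orderIso f _).trans
    (OrderIso.setCongr _ _ (hf.image_Icc_of_monotoneOn hαβ hmono.monotoneOn))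
  have he : ∀ x : Icc α β, (e x : ℝ) = f x := fun _ => rfl
  refine ⟨fun s => e.symm (projIcc _ _ hfαβ s),
    continuous_subtype_val.comp (e.symm.continuous.comp continuous_projIcc),
    Subtype.mono_coe _ |>.comp (e.symm.monotone.comp (monotone_projIcc hfαβ)),
    fun s => (e.symm _).2, fun s hs => ?_, fun x hx => ?_⟩
  · rw [← he, e.apply_symm_apply, projIcc_of_mem _ hs]
  · have : projIcc _ _ hfαβ (f x) = e ⟨x, hx⟩ := by
      rw [projIcc_of_mem _ (by exact (e ⟨x, hx⟩).2)]; rfl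
    simp only [this, e.symm_apply_apply]

theorem lipschitzOnWith_fluxField {a b G' : ℝ → ℝ} {S : Set ℝ} {KG : NNReal} {x A B : ℝ}
    (hA : 0 < A) (ha : A ≤ a x) (hb : ‖b x‖ ≤ B) (hG' : LipschitzOnWith KG G' S) :
    LipschitzOnWith (A⁻¹ + B * KG).toNNReal (fun z : ℝ × ℝ => (z.2 / a x, b x * G' z.1))
      {z | z.1 ∈ S} := by
  have hB : 0 ≤ B := (norm_nonneg _).trans hb
  refine LipschitzOnWith.of_dist_le' fun z hz w hw => ?_
  have h₁ : dist z.1 w.1 ≤ dist z w := by rw [Prod.dist_eq]; exact le_max_left _ _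
  have h₂ : dist z.2 w.2 ≤ dist z w := by rw [Prod.dist_eq]; exact le_max_right _ _
  rw [Prod.dist_eq]
  refine max_le ?_ ?_
  · calc dist (z.2 / a x) (w.2 / a x) = dist z.2 w.2 / a x := by
          rw [Real.dist_eq, Real.dist_eq, ← sub_div, abs_div, abs_of_pos (hA.trans_le ha)]
      _ ≤ A⁻¹ * dist z w := by
          rw [div_eq_inv_mul]
          exact mul_le_mul (inv_anti₀ hA ha) h₂ dist_nonneg (inv_pos.2 hA).le
      _ ≤ (A⁻¹ + B * KG) * dist z w := by
          gcongr; exact le_add_of_nonneg_right (mul_nonneg hB KG.2)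
  · calc dist (b x * G' z.1) (b x * G' w.1) = ‖b x‖ * dist (G' z.1) (G' w.1) := by
          rw [dist_eq_norm, dist_eq_norm, ← mul_sub, norm_mul]
      _ ≤ B * (KG * dist z w) := by
          gcongr
          exact (hG'.dist_le_mul z.1 hz w.1 hw).trans (mul_le_mul_of_nonneg_left h₁ KG.2)
      _ ≤ (A⁻¹ + B * KG) * dist z w := by
          rw [← mul_assoc]; gcongr; exact le_add_of_nonneg_left (inv_pos.2 hA).le

structure IsSolutionOn (α β : ℝ) (a b G' u u' : ℝ → ℝ) : Prop where
  hasDerivWithinAt : ∀ x ∈ Icc α β, HasDerivWithinAt u (u' x) (Icc α β) x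
  continuousOn_deriv : ContinuousOn u' (Icc α β)
  hasDerivAt_flux : ∀ x ∈ Ioo α β, HasDerivAt (fun y => a y * u' y) (b x * G' (u x)) x

namespace IsSolutionOn

variable {α β : ℝ} {a b G' u u' : ℝ → ℝ}

theorem continuousOn (h : IsSolutionOn α β a b G' u u') : ContinuousOn u (Icc α β) :=
  fun x hx => (h.hasDerivWithinAt x hx).continuousWithinAt

theorem hasDerivAt (h : IsSolutionOn α β a b G' u u') {x : ℝ} (hx : x ∈ Ioo α β) :
    HasDerivAt u (u' x) x :=
  (h.hasDerivWithinAt x (Ioo_subset_Icc_self hx)).hasDerivAt (Icc_mem_nhds hx.1 hx.2)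

theorem mono (h : IsSolutionOn α β a b G' u u') {α' β' : ℝ} (hα : α ≤ α') (hβ : β' ≤ β) :
    IsSolutionOn α' β' a b G' u u' where
  hasDerivWithinAt x hx :=
    (h.hasDerivWithinAt x (Icc_subset_Icc hα hβ hx)).mono (Icc_subset_Icc hα hβ)
  continuousOn_deriv := h.continuousOn_deriv.mono (Icc_subset_Icc hα hβ)
  hasDerivAt_flux x hx := h.hasDerivAt_flux x (Ioo_subset_Ioo hα hβ hx)

theorem reflect (h : IsSolutionOn α β a b G' u u') (ha : ∀ x, a (-x) = a x)
    (hb : ∀ x, b (-x) = b x) (hG' : ∀ s, G' (-s) = -G' s) :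
    IsSolutionOn (-β) (-α) a b G' (fun x => -u (-x)) (fun x => u' (-x)) := by
  have hIcc : MapsTo Neg.neg (Icc (-β) (-α)) (Icc α β) :=
    fun t ht => ⟨le_neg.1 ht.2, neg_le.1 ht.1⟩
  have hIoo : MapsTo Neg.neg (Ioo (-β) (-α)) (Ioo α β) :=
    fun t ht => ⟨lt_neg.1 ht.2, neg_lt.1 ht.1⟩
  refine ⟨fun x hx => ?_, h.continuousOn_deriv.comp continuousOn_neg hIcc, fun x hx => ?_⟩
  · exact ((h.hasDerivWithinAt _ (hIcc hx)).comp x (hasDerivWithinAt_neg x _) hIcc).neg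
      |>.congr_deriv (by ring)
  · have hflux := (h.hasDerivAt_flux _ (hIoo hx)).comp x (hasDerivAt_neg x)
    simp only [Function.comp_def, ha] at hflux
    exact hflux.congr_deriv (by simp [hb, hG'])

theorem strictMonoOn (h : IsSolutionOn α β a b G' u u') (hpos : ∀ x ∈ Ioo α β, 0 < u' x) :
    StrictMonoOn u (Icc α β) :=
  strictMonoOn_of_deriv_pos (convex_Icc α β) h.continuousOn fun x hx => by
    rw [interior_Icc] at hx
    rw [(h.hasDerivAt hx).deriv]
    exact hpos x hx

theorem eqOn_of_eq (ha : ContinuousOn a (Icc α β)) (hb : ContinuousOn b (Icc α β))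
    (hapos : ∀ x ∈ Icc α β, 0 < a x) (hG' : LocallyLipschitz G') {u₁ u₁' u₂ u₂' : ℝ → ℝ}
    (h₁ : IsSolutionOn α β a b G' u₁ u₁') (h₂ : IsSolutionOn α β a b G' u₂ u₂') {x₀ : ℝ}
    (hx₀ : x₀ ∈ Icc α β) (hu : u₁ x₀ = u₂ x₀) (hu' : u₁' x₀ = u₂' x₀) :
    EqOn u₁ u₂ (Icc α β) := by
  obtain ⟨c, hc, hcmin⟩ := isCompact_Icc.exists_isMinOn ⟨x₀, hx₀⟩ ha
  obtain ⟨B, hB⟩ := isCompact_Icc.exists_bound_of_continuousOn hb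
  obtain ⟨KG, hKG⟩ := hG'.locallyLipschitzOn.exists_lipschitzOnWith_of_compact
    ((isCompact_Icc.image_of_continuousOn h₁.continuousOn).union
      (isCompact_Icc.image_of_continuousOn h₂.continuousOn))
  have hcurve : ∀ {u u'}, IsSolutionOn α β a b G' u u' → ∀ x ∈ Ioo α β,
      HasDerivAt (fun x => (u x, a x * u' x)) ((a x * u' x) / a x, b x * G' (u x)) x :=
    fun h x hx => (h.hasDerivAt hx).prodMk (h.hasDerivAt_flux x hx) |>.congr_deriv <| by
      rw [mul_div_cancel_left₀ _ (hapos x (Ioo_subset_Icc_self hx)).ne']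
  intro x hx
  exact congrArg Prod.fst <| ODE_solution_eqOn_Icc
    (v := fun x z => (z.2 / a x, b x * G' z.1)) (s := fun _ => {z | z.1 ∈ _})
    (fun x hx => lipschitzOnWith_fluxField (hapos c hc) (hcmin (Ioo_subset_Icc_self hx))
      (hB x (Ioo_subset_Icc_self hx)) hKG) hx₀
    (h₁.continuousOn.prodMk (ha.mul h₁.continuousOn_deriv)) (hcurve h₁)
    (fun x hx => Or.inl (mem_image_of_mem _ (Ioo_subset_Icc_self hx)))
    (h₂.continuousOn.prodMk (ha.mul h₂.continuousOn_deriv)) (hcurve h₂)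
    (fun x hx => Or.inr (mem_image_of_mem _ (Ioo_subset_Icc_self hx))) (by simp [hu, hu']) hx

theorem const {c : ℝ} (hc : G' c = 0) : IsSolutionOn α β a b G' (fun _ => c) 0 where
  hasDerivWithinAt x _ := hasDerivWithinAt_const x _ c
  continuousOn_deriv := continuousOn_const
  hasDerivAt_flux x _ := by simpa [hc] using hasDerivAt_const x (0 : ℝ)

theorem energy_antitoneOn {G ab' : ℝ → ℝ} (ha : ContinuousOn a (Icc α β))
    (hb : ContinuousOn b (Icc α β)) (hapos : ∀ x ∈ Icc α β, 0 < a x)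
    (hbpos : ∀ x ∈ Icc α β, 0 < b x) (hG : ∀ s, HasDerivAt G (G' s) s)
    (hab : ∀ x ∈ Ioo α β, HasDerivAt (fun y => a y * b y) (ab' x) x)
    (hab' : ∀ x ∈ Ioo α β, 0 ≤ ab' x) (h : IsSolutionOn α β a b G' u u') :
    AntitoneOn (fun x => (a x * u' x) ^ 2 / (a x * b x) - 2 * G (u x)) (Icc α β) := by
  have hderiv : ∀ x ∈ Ioo α β, HasDerivAt
      (fun x => (a x * u' x) ^ 2 / (a x * b x) - 2 * G (u x))
      (-(ab' x * (a x * u' x) ^ 2 / (a x * b x) ^ 2)) x := by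
    intro x hx
    have hxI := Ioo_subset_Icc_self hx
    have hax := (hapos x hxI).ne'
    have hbx := (hbpos x hxI).ne'
    refine ((h.hasDerivAt_flux x hx).pow 2 |>.div (hab x hx) (mul_ne_zero hax hbx)).sub
      (((hG (u x)).comp x (h.hasDerivAt hx)).const_mul 2) |>.congr_deriv ?_
    simp only [Pi.pow_apply]
    field_simp
    ring
  have hGc : Continuous G := continuous_iff_continuousAt.2 fun s => (hG s).continuousAt
  refine antitoneOn_of_deriv_nonpos (convex_Icc α β) ?_ (fun x hx => ?_) fun x hx => ?_
  · exact ((ha.mul h.continuousOn_deriv).pow 2).div (ha.mul hb)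
      (fun x hx => (mul_pos (hapos x hx) (hbpos x hx)).ne') |>.sub
      (continuousOn_const.mul (hGc.comp_continuousOn h.continuousOn))
  · rw [interior_Icc] at hx
    exact (hderiv x hx).differentiableAt.differentiableWithinAt
  · rw [interior_Icc] at hx
    rw [(hderiv x hx).deriv, neg_nonpos]
    have := hab' x hx
    positivity

theorem exists_isHeightProfile (ha : ContinuousOn a (Icc α β))
    (hapos : ∀ x ∈ Icc α β, 0 < a x) (h : IsSolutionOn α β a b G' u u') (hαβ : α ≤ β)
    (hpos : ∀ x ∈ Icc α β, 0 < u' x) :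
    ∃ X : ℝ → ℝ, Monotone X ∧ (∀ s, X s ∈ Icc α β) ∧ (∀ x ∈ Icc α β, X (u x) = x) ∧
      IsHeightProfile a (fun y => a y * b y) G' (u α) (u β) X (fun s => a (X s) * u' (X s)) := by
  obtain ⟨X, hXc, hXmono, hXmem, huX, hXu⟩ := StrictMonoOn.exists_continuous_inverse hαβ
    h.continuousOn (h.strictMonoOn fun x hx => hpos x (Ioo_subset_Icc_self hx))
  have hXmaps : MapsTo X (Icc (u α) (u β)) (Icc α β) := fun s _ => hXmem s
  have hXIoo : ∀ s ∈ Ioo (u α) (u β), X s ∈ Ioo α β := by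
    intro s hs
    refine ⟨(hXmem s).1.lt_of_ne fun he => ?_, (hXmem s).2.lt_of_ne fun he => ?_⟩
    · exact hs.1.ne (by rw [he, huX s (Ioo_subset_Icc_self hs)])
    · exact hs.2.ne (by rw [← he, huX s (Ioo_subset_Icc_self hs)])
  have hX' : ∀ s ∈ Ioo (u α) (u β), HasDerivAt X (u' (X s))⁻¹ s := fun s hs =>
    (h.hasDerivAt (hXIoo s hs)).of_local_left_inverse hXc.continuousAt
      (hpos _ (hXmem s)).ne' <| Filter.mem_of_superset (Icc_mem_nhds hs.1 hs.2) huX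
  refine ⟨X, hXmono, hXmem, hXu, ⟨hXc.continuousOn,
    (ha.mul h.continuousOn_deriv).comp hXc.continuousOn hXmaps, ha.comp hXc.continuousOn hXmaps,
    fun s _ => mul_pos (hapos _ (hXmem s)) (hpos _ (hXmem s)), fun s _ => hapos _ (hXmem s),
    fun s hs => ?_, fun s hs => ?_⟩⟩
  · refine (hX' s hs).congr_deriv ?_
    field_simp [(hapos _ (hXmem s)).ne']
  · refine ((h.hasDerivAt_flux _ (hXIoo s hs)).pow 2).comp s (hX' s hs) |>.congr_deriv ?_
    rw [huX s (Ioo_subset_Icc_self hs)]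
    field_simp [(hpos _ (hXmem s)).ne']
    ring

end IsSolutionOn

theorem odd_of_hasDerivAt_of_even {G G' : ℝ → ℝ} (hG : ∀ s, G (-s) = G s)
    (hG' : ∀ s, HasDerivAt G (G' s) s) (s : ℝ) : G' (-s) = -G' s := by
  have h := (hG' (-s)).comp s (hasDerivAt_neg s)
  simp only [Function.comp_def, hG] at h
  linarith [(hG' s).unique h]

structure BVPHypotheses (L m : ℝ) (a b ab' G G' : ℝ → ℝ) : Prop where
  pos_L : 0 < L
  pos_m : 0 < m
  continuousOn_a : ContinuousOn a (Icc (-L) L)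
  continuousOn_b : ContinuousOn b (Icc (-L) L)
  a_pos : ∀ x ∈ Icc (-L) L, 0 < a x
  b_pos : ∀ x ∈ Icc (-L) L, 0 < b x
  a_even : ∀ x, a (-x) = a x
  b_even : ∀ x, b (-x) = b x
  G_even : ∀ s, G (-s) = G s
  hasDerivAt_G : ∀ s, HasDerivAt G (G' s) s
  locallyLipschitz_G' : LocallyLipschitz G'
  hasDerivAt_ab : ∀ x ∈ Ioo 0 L, HasDerivAt (fun y => a y * b y) (ab' x) x
  ab'_nonneg : ∀ x ∈ Ioo 0 L, 0 ≤ ab' x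
  G_ge : ∀ s > 0, G m ≤ G s

namespace BVPHypotheses

variable {L m : ℝ} {a b ab' G G' u u' : ℝ → ℝ}

theorem G'_neg (H : BVPHypotheses L m a b ab' G G') (s : ℝ) : G' (-s) = -G' s :=
  odd_of_hasDerivAt_of_even H.G_even H.hasDerivAt_G s

theorem G'_eq_zero_of_le (H : BVPHypotheses L m a b ab' G G') {c : ℝ} (hc : G c ≤ G m) :
    G' c = 0 := by
  have hGc : Continuous G := continuous_iff_continuousAt.2 fun s => (H.hasDerivAt_G s).continuousAt
  have hmin : ∀ s, G m ≤ G s := by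
    intro s
    rcases lt_trichotomy s 0 with hs | rfl | hs
    · rw [← H.G_even s]; exact H.G_ge _ (neg_pos.2 hs)
    · exact ge_of_tendsto (hGc.tendsto 0 |>.mono_left nhdsWithin_le_nhds)
        (eventually_nhdsWithin_of_forall (s := Ioi 0) fun s hs => H.G_ge s hs)
    · exact H.G_ge s hs
  exact IsLocalMin.hasDerivAt_eq_zero (Eventually.of_forall fun s => hc.trans (hmin s))
    (H.hasDerivAt_G c)

theorem ab_le_of_abs_le (H : BVPHypotheses L m a b ab' G G') {y z : ℝ} (hy : y ∈ Icc (-L) L)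
    (hz : z ∈ Icc (-L) L) (hyz : |y| ≤ |z|) : a y * b y ≤ a z * b z := by
  have hmono : MonotoneOn (fun x => a x * b x) (Icc 0 L) := by
    refine monotoneOn_of_hasDerivWithinAt_nonneg (f' := ab') (convex_Icc 0 L)
      ((H.continuousOn_a.mul H.continuousOn_b).mono (Icc_subset_Icc (by linarith [H.pos_L]) le_rfl))
      (fun x hx => ?_) fun x hx => ?_
    · rw [interior_Icc] at hx; exact (H.hasDerivAt_ab x hx).hasDerivWithinAt
    · rw [interior_Icc] at hx; exact H.ab'_nonneg x hx
  have habs : ∀ x, a |x| * b |x| = a x * b x := fun x => by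
    rcases abs_choice x with h | h <;> rw [h]; simp only [H.a_even, H.b_even]
  rw [← habs y, ← habs z]
  exact hmono ⟨abs_nonneg y, abs_le.2 hy⟩ ⟨abs_nonneg z, abs_le.2 hz⟩ hyz

theorem reflect (H : BVPHypotheses L m a b ab' G G') (hu : IsSolutionOn (-L) L a b G' u u') :
    IsSolutionOn (-L) L a b G' (fun x => -u (-x)) (fun x => u' (-x)) := by
  simpa only [neg_neg] using hu.reflect H.a_even H.b_even H.G'_neg

theorem G_le_of_deriv_eq_zero (H : BVPHypotheses L m a b ab' G G')
    (hu : IsSolutionOn (-L) L a b G' u u') (hl : u (-L) = -m) (hr : u L = m) {x : ℝ}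
    (hx : x ∈ Icc (-L) L) (hx' : u' x = 0) : G (u x) ≤ G m := by
  have hsub : Icc 0 L ⊆ Icc (-L) L := Icc_subset_Icc (by linarith [H.pos_L]) le_rfl
  have hLI : L ∈ Icc (-L) L := hsub (right_mem_Icc.2 H.pos_L.le)
  have key : ∀ {v v' : ℝ → ℝ}, IsSolutionOn (-L) L a b G' v v' → v L = m →
      ∀ y ∈ Icc 0 L, v' y = 0 → G (v y) ≤ G m := by
    intro v v' hv hvL y hy hy'
    have hE := (hv.mono (by linarith [H.pos_L]) le_rfl).energy_antitoneOn
      (H.continuousOn_a.mono hsub) (H.continuousOn_b.mono hsub) (fun x hx => H.a_pos x (hsub hx))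
      (fun x hx => H.b_pos x (hsub hx)) H.hasDerivAt_G H.hasDerivAt_ab H.ab'_nonneg hy
      (right_mem_Icc.2 H.pos_L.le) hy.2
    have hflux : 0 ≤ (a L * v' L) ^ 2 / (a L * b L) :=
      div_nonneg (sq_nonneg _) (mul_pos (H.a_pos L hLI) (H.b_pos L hLI)).le
    simp only [hy', hvL, mul_zero, zero_pow two_ne_zero, zero_div, zero_sub] at hE
    linarith
  rcases le_total 0 x with hx0 | hx0
  · exact key hu hr x ⟨hx0, hx.2⟩ hx'
  · simpa [H.G_even] using key (H.reflect hu) (by simp [hl]) (-x)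
      ⟨neg_nonneg.2 hx0, by linarith [hx.1]⟩ (by simpa using hx')

theorem deriv_pos (H : BVPHypotheses L m a b ab' G G') (hu : IsSolutionOn (-L) L a b G' u u')
    (hl : u (-L) = -m) (hr : u L = m) : ∀ x ∈ Icc (-L) L, 0 < u' x := by
  have hLL : -L < L := by linarith [H.pos_L]
  have hcrit : ∀ x ∈ Icc (-L) L, u' x ≠ 0 := by
    intro x hx hx'
    have hconst := hu.eqOn_of_eq H.continuousOn_a H.continuousOn_b H.a_pos
      H.locallyLipschitz_G' (IsSolutionOn.const (H.G'_eq_zero_of_le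
        (H.G_le_of_deriv_eq_zero hu hl hr hx hx'))) hx rfl hx'
    have h₁ : u L = u x := hconst (right_mem_Icc.2 hLL.le)
    have h₂ : u (-L) = u x := hconst (left_mem_Icc.2 hLL.le)
    linarith [H.pos_m]
  obtain ⟨ξ, hξ, hslope⟩ :=
    exists_hasDerivAt_eq_slope u u' hLL hu.continuousOn fun x hx => hu.hasDerivAt hx
  have hξ' : 0 < u' ξ := by
    rw [hslope, hl, hr]; exact div_pos (by linarith [H.pos_m]) (by linarith)
  intro x hx
  by_contra! hneg
  obtain ⟨z, hz, hz'⟩ := isPreconnected_Icc.intermediate_value hx (Ioo_subset_Icc_self hξ)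
    hu.continuousOn_deriv ⟨hneg, hξ'.le⟩
  exact hcrit z hz hz'

theorem exists_isHeightProfile (H : BVPHypotheses L m a b ab' G G')
    (hu : IsSolutionOn (-L) L a b G' u u') (hl : u (-L) = -m) (hr : u L = m) :
    ∃ X : ℝ → ℝ, Monotone X ∧ (∀ s, X s ∈ Icc (-L) L) ∧ (∀ x ∈ Icc (-L) L, X (u x) = x) ∧
      IsHeightProfile a (fun y => a y * b y) G' (-m) m X (fun s => a (X s) * u' (X s)) := by
  rw [← hl, ← hr]
  exact hu.exists_isHeightProfile H.continuousOn_a H.a_pos (by linarith [H.pos_L])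
    (H.deriv_pos hu hl hr)

/-- The comparison condition of `IsHeightProfile.flux_le` for a profile and its reflection. -/
theorem reflect_condition (H : BVPHypotheses L m a b ab' G G') (hG' : ∀ s ∈ Ioo 0 m, G' s ≤ 0)
    {X : ℝ → ℝ} (hX : Monotone X) (hXmem : ∀ s, X s ∈ Icc (-L) L) {s : ℝ} (hs : s ∈ Ioo (-m) m)
    (hXs : X s ≤ -X (-s)) : a (-X (-s)) * b (-X (-s)) * G' s ≤ a (X s) * b (X s) * G' s := by
  rw [H.a_even, H.b_even]
  rcases le_or_gt 0 s with hs0 | hs0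
  · have hg : G' s ≤ 0 := by
      rcases hs0.eq_or_lt with rfl | hs0
      · have := H.G'_neg 0
        rw [neg_zero] at this
        linarith
      · exact hG' s ⟨hs0, hs.2⟩
    have := hX (neg_le_self hs0)
    refine mul_le_mul_of_nonpos_right (H.ab_le_of_abs_le (hXmem s) (hXmem (-s)) ?_) hg
    rw [abs_of_nonpos (show X (-s) ≤ 0 by linarith)]
    exact abs_le.2 ⟨by linarith, hXs⟩
  · have hg : 0 ≤ G' s := by
      have := hG' (-s) ⟨by linarith, by linarith [hs.1]⟩
      rw [H.G'_neg] at this; linarith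
    have := hX (show s ≤ -s by linarith)
    refine mul_le_mul_of_nonneg_right (H.ab_le_of_abs_le (hXmem (-s)) (hXmem s) ?_) hg
    rw [abs_of_nonpos (show X s ≤ 0 by linarith)]
    exact abs_le.2 ⟨by linarith, by linarith⟩

theorem neg_eq (H : BVPHypotheses L m a b ab' G G') (hG' : ∀ s ∈ Ioo 0 m, G' s ≤ 0)
    (hu : IsSolutionOn (-L) L a b G' u u') (hl : u (-L) = -m) (hr : u L = m) :
    ∀ x ∈ Icc (-L) L, u (-x) = -u x := by
  have hLL : -L ≤ L := by linarith [H.pos_L]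
  have hmm : -m < m := by linarith [H.pos_m]
  obtain ⟨X, hXmono, hXmem, hXu, hX⟩ := H.exists_isHeightProfile hu hl hr
  have hXl : X (-m) = -L := by simpa [hl] using hXu (-L) (left_mem_Icc.2 hLL)
  have hXr : X m = L := by simpa [hr] using hXu L (right_mem_Icc.2 hLL)
  have hY := hX.reflect H.a_even (fun y => by simp only [H.a_even, H.b_even]) H.G'_neg
  simp only [neg_neg] at hY
  have hYmono : Monotone fun s => -X (-s) := fun s t hst => neg_le_neg (hXmono (neg_le_neg hst))
  have hYmem : ∀ s, -X (-s) ∈ Icc (-L) L := fun s =>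
    ⟨neg_le_neg (hXmem (-s)).2, neg_le.1 (hXmem (-s)).1⟩
  have h₁ := hX.flux_le hY hmm (by simp [hXl, hXr]) (by simp [hXl, hXr])
    fun s hs => H.reflect_condition hG' hXmono hXmem hs
  have h₂ := hY.flux_le hX hmm (by simp [hXl, hXr]) (by simp [hXl, hXr])
    fun s hs => by simpa only [neg_neg] using H.reflect_condition hG' hYmono hYmem hs
  simp only [neg_neg, hXl, hXr, H.a_even] at h₁ h₂
  have hslope : u' (-L) = u' L :=
    mul_left_cancel₀ (H.a_pos L (right_mem_Icc.2 hLL)).ne' (le_antisymm h₁ h₂)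
  have heq := hu.eqOn_of_eq H.continuousOn_a H.continuousOn_b H.a_pos H.locallyLipschitz_G'
    (H.reflect hu) (left_mem_Icc.2 hLL) (by simp [hl, hr]) (by simp [hslope])
  intro x hx
  simpa using heq (show -x ∈ Icc (-L) L from ⟨neg_le_neg hx.2, neg_le.1 hx.1⟩)

theorem eqOn (H : BVPHypotheses L m a b ab' G G') (hG' : ∀ s ∈ Ioo 0 m, G' s ≤ 0)
    {u₁ u₁' u₂ u₂' : ℝ → ℝ} (hu₁ : IsSolutionOn (-L) L a b G' u₁ u₁') (hl₁ : u₁ (-L) = -m)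
    (hr₁ : u₁ L = m) (hu₂ : IsSolutionOn (-L) L a b G' u₂ u₂') (hl₂ : u₂ (-L) = -m)
    (hr₂ : u₂ L = m) : EqOn u₁ u₂ (Icc (-L) L) := by
  have hLL : -L ≤ L := by linarith [H.pos_L]
  have h0 : (0 : ℝ) ∈ Icc (-L) L := ⟨by linarith, H.pos_L.le⟩
  have hzero : ∀ {u u'}, IsSolutionOn (-L) L a b G' u u' → u (-L) = -m → u L = m → u 0 = 0 :=
    fun hu hl hr => by
      have := H.neg_eq hG' hu hl hr 0 h0
      rw [neg_zero] at this
      linarith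
  obtain ⟨X₁, hX₁mono, hX₁mem, hX₁u, hX₁⟩ := H.exists_isHeightProfile hu₁ hl₁ hr₁
  obtain ⟨X₂, hX₂mono, hX₂mem, hX₂u, hX₂⟩ := H.exists_isHeightProfile hu₂ hl₂ hr₂
  have hX₁0 : X₁ 0 = 0 := by simpa [hzero hu₁ hl₁ hr₁] using hX₁u 0 h0
  have hX₂0 : X₂ 0 = 0 := by simpa [hzero hu₂ hl₂ hr₂] using hX₂u 0 h0
  have hX₁m : X₁ m = L := by simpa [hr₁] using hX₁u L (right_mem_Icc.2 hLL)
  have hX₂m : X₂ m = L := by simpa [hr₂] using hX₂u L (right_mem_Icc.2 hLL)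
  have hbehind : ∀ {X Y : ℝ → ℝ}, Monotone X → X 0 = 0 → (∀ s, X s ∈ Icc (-L) L) →
      (∀ s, Y s ∈ Icc (-L) L) → ∀ s ∈ Ioo 0 m, X s ≤ Y s →
      a (Y s) * b (Y s) * G' s ≤ a (X s) * b (X s) * G' s := by
    intro X Y hX hX0 hXmem hYmem s hs hXY
    have hXs : 0 ≤ X s := hX0 ▸ hX hs.1.le
    refine mul_le_mul_of_nonpos_right (H.ab_le_of_abs_le (hXmem s) (hYmem s) ?_) (hG' s hs)
    rwa [abs_of_nonneg hXs, abs_of_nonneg (hXs.trans hXY)]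
  have hm0 : -m ≤ 0 := by linarith [H.pos_m]
  have h₁ := (hX₁.mono hm0 le_rfl).flux_le (hX₂.mono hm0 le_rfl) H.pos_m (by rw [hX₁0, hX₂0])
    (by rw [hX₁m, hX₂m]) (hbehind hX₁mono hX₁0 hX₁mem hX₂mem)
  have h₂ := (hX₂.mono hm0 le_rfl).flux_le (hX₁.mono hm0 le_rfl) H.pos_m (by rw [hX₁0, hX₂0])
    (by rw [hX₁m, hX₂m]) (hbehind hX₂mono hX₂0 hX₂mem hX₁mem)
  simp only [hX₁0, hX₂0] at h₁ h₂
  exact hu₁.eqOn_of_eq H.continuousOn_a H.continuousOn_b H.a_pos H.locallyLipschitz_G' hu₂ h0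
    ((hzero hu₁ hl₁ hr₁).trans (hzero hu₂ hl₂ hr₂).symm)
    (mul_left_cancel₀ (H.a_pos 0 h0).ne' (le_antisymm h₁ h₂))

end BVPHypotheses

/-- Theorem 1.3 / Proposition 4.1 of the paper.
With `a, b` positive even `C¹` weights, `G` even with locally Lipschitz derivative,
`(ab)' ≥ 0` on `(0, L)`, `G ≥ G(m)` on `(0, ∞)`, and `G' ≤ 0` on `(0, m)`,
the problem `-(a u')' = -b G'(u)`, `u(L) = -u(-L) = m` has at most one solution;
moreover every solution is odd and strictly increasing. -/
theorem stmt_7 (L m : ℝ) (hL : 0 < L) (hm : 0 < m) (a b ab' G G' : ℝ → ℝ)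
    (haC1 : ContDiffOn ℝ 1 a (Icc (-L) L)) (hbC1 : ContDiffOn ℝ 1 b (Icc (-L) L))
    (hapos : ∀ x ∈ Icc (-L) L, 0 < a x) (hbpos : ∀ x ∈ Icc (-L) L, 0 < b x)
    (haeven : ∀ x, a (-x) = a x) (hbeven : ∀ x, b (-x) = b x)
    (hGeven : ∀ s, G (-s) = G s)
    (hG : ∀ s, HasDerivAt G (G' s) s) (hG'lip : LocallyLipschitz G')
    (hab : ∀ x ∈ Icc (-L) L,
      HasDerivWithinAt (fun y => a y * b y) (ab' x) (Icc (-L) L) x)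
    (habmono : ∀ x ∈ Ioo (0:ℝ) L, 0 ≤ ab' x)
    (hGge : ∀ s > (0:ℝ), G m ≤ G s)
    (hG'le : ∀ s ∈ Ioo (0:ℝ) m, G' s ≤ 0) :
    (∀ u₁ u₂ : ℝ → ℝ, IsSolutionBVP L m a b G' u₁ → IsSolutionBVP L m a b G' u₂ →
      EqOn u₁ u₂ (Icc (-L) L)) ∧
    (∀ u : ℝ → ℝ, IsSolutionBVP L m a b G' u →
      (∀ x ∈ Icc (-L) L, u (-x) = -u x) ∧ StrictMonoOn u (Icc (-L) L)) := by
  have H : BVPHypotheses L m a b ab' G G' :=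
    ⟨hL, hm, haC1.continuousOn, hbC1.continuousOn, hapos, hbpos, haeven, hbeven, hGeven, hG,
      hG'lip, fun x hx => (hab x ⟨by linarith [hx.1], hx.2.le⟩).hasDerivAt
        (Icc_mem_nhds (by linarith [hx.1]) hx.2), habmono, hGge⟩
  refine ⟨fun u₁ u₂ ⟨u₁', hd₁, hc₁, hf₁, hl₁, hr₁⟩ ⟨u₂', hd₂, hc₂, hf₂, hl₂, hr₂⟩ =>
    H.eqOn hG'le ⟨hd₁, hc₁, hf₁⟩ hl₁ hr₁ ⟨hd₂, hc₂, hf₂⟩ hl₂ hr₂,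
    fun u ⟨u', hd, hc, hf, hl, hr⟩ => ?_⟩
  have hu : IsSolutionOn (-L) L a b G' u u' := ⟨hd, hc, hf⟩
  exact ⟨H.neg_eq hG'le hu hl hr,
    hu.strictMonoOn fun x hx => H.deriv_pos hu hl hr x (Ioo_subset_Icc_self hx)⟩
end

section
/- Let $L, m > 0$, let $G : \mathbb{R} \to \mathbb{R}$ be continuous and even, and let $v: [-L,L] \to [-m,m]$ be a $C^1$ strictly increasing bijection with inverse $\rho$. For $t \in [0,1]$ let $v^t$ be the inverse of $\rho^t(\lambda) = t\rho(\lambda) - (1-t)\rho(-\lambda)$. Then $\int_{-L}^L G(v^t(x))\,dx = \int_{-L}^L G(v(x))\,dx$ for all $t \in [0,1]$. -/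
open Set intervalIntegral MeasureTheory

namespace Stmt9Aux

noncomputable def cl (a b x : ℝ) : ℝ := max a (min b x)

lemma cl_mono (a b : ℝ) : Monotone (cl a b) := fun x y hxy =>
  max_le_max le_rfl (min_le_min le_rfl hxy)

lemma cl_mem {a b : ℝ} (h : a ≤ b) (x : ℝ) : cl a b x ∈ Icc a b :=
  ⟨le_max_left _ _, max_le h (min_le_left _ _)⟩

lemma cl_of_mem {a b x : ℝ} (hx : x ∈ Icc a b) : cl a b x = x := by
  unfold cl
  rw [min_eq_right hx.2, max_eq_right hx.1]

lemma key {L m : ℝ} (hL : 0 < L) (hm : 0 < m) {w σ : ℝ → ℝ}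
    (hσ : StrictMonoOn σ (Icc (-m) m)) (hσl : σ (-m) = -L) (hσr : σ m = L)
    (hw : MapsTo w (Icc (-L) L) (Icc (-m) m))
    (hσw : ∀ x ∈ Icc (-L) L, σ (w x) = x) {c d : ℝ} (hcd : c ≤ d) :
    Measure.map (fun x => w (cl (-L) L x)) (volume.restrict (Icc (-L) L)) (Ioc c d)
      = ENNReal.ofReal (σ (cl (-m) m d) - σ (cl (-m) m c)) := by
  have hmm : -m ≤ m := by linarith
  have hLL : -L ≤ L := by linarith
  have hmemm : (-m) ∈ Icc (-m) m := ⟨le_rfl, hmm⟩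
  have hmemM : m ∈ Icc (-m) m := ⟨hmm, le_rfl⟩
  have hσmono := hσ.monotoneOn
  have hwmono : MonotoneOn w (Icc (-L) L) := by
    intro x hx y hy hxy
    by_contra h
    push_neg at h
    have := hσ (hw hy) (hw hx) h
    rw [hσw x hx, hσw y hy] at this
    exact absurd hxy (not_le.2 this)
  have hwclmono : Monotone (fun x => w (cl (-L) L x)) := fun x y hxy =>
    hwmono (cl_mem hLL x) (cl_mem hLL y) (cl_mono _ _ hxy)
  have hwclmeas : Measurable (fun x => w (cl (-L) L x)) := hwclmono.measurable
  rw [Measure.map_apply hwclmeas measurableSet_Ioc, Measure.restrict_apply' measurableSet_Icc]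
  set c' := cl (-m) m c with hc'def
  set d' := cl (-m) m d with hd'def
  have hc' : c' ∈ Icc (-m) m := cl_mem hmm c
  have hd' : d' ∈ Icc (-m) m := cl_mem hmm d
  have hσc'a : -L ≤ σ c' := hσl ▸ hσmono hmemm hc' hc'.1
  have hσd'b : σ d' ≤ L := hσr ▸ hσmono hd' hmemM hd'.2
  have hc'd' : c' ≤ d' := cl_mono _ _ hcd
  have hσcd : σ c' ≤ σ d' := hσmono hc' hd' hc'd'
  set S := (fun x => w (cl (-L) L x)) ⁻¹' Ioc c d ∩ Icc (-L) L with hSdef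
  have hsub1 : S ⊆ Icc (σ c') (σ d') := by
    rintro x ⟨hx1, hx2⟩
    rw [mem_preimage, cl_of_mem hx2] at hx1
    have hwx := hw hx2
    have h1 : c' ≤ w x := max_le hwx.1 (le_trans (min_le_right _ _) hx1.1.le)
    have h2 : w x ≤ d' := le_trans (le_min hwx.2 hx1.2) (le_max_right _ _)
    constructor
    · rw [← hσw x hx2]; exact hσmono hc' hwx h1
    · rw [← hσw x hx2]; exact hσmono hwx hd' h2
  have hsub2 : Ioo (σ c') (σ d') ⊆ S := by
    rintro x ⟨h1, h2⟩
    have hxIcc : x ∈ Icc (-L) L := ⟨le_trans hσc'a h1.le, le_trans h2.le hσd'b⟩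
    have hwx := hw hxIcc
    refine ⟨?_, hxIcc⟩
    rw [mem_preimage, cl_of_mem hxIcc]
    constructor
    · by_contra h
      push_neg at h
      have hle : w x ≤ c' := le_trans (le_min hwx.2 h) (le_max_right _ _)
      have := hσmono hwx hc' hle
      rw [hσw x hxIcc] at this
      exact absurd h1 (not_lt.2 this)
    · by_contra h
      push_neg at h
      have hle : d' ≤ w x := max_le hwx.1 (le_of_lt (lt_of_le_of_lt (min_le_right _ _) h))
      have := hσmono hd' hwx hle
      rw [hσw x hxIcc] at this
      exact absurd h2 (not_lt.2 this)
  refine le_antisymm ?_ ?_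
  · calc volume S ≤ volume (Icc (σ c') (σ d')) := measure_mono hsub1
      _ = ENNReal.ofReal (σ d' - σ c') := Real.volume_Icc
  · calc ENNReal.ofReal (σ d' - σ c') = volume (Ioo (σ c') (σ d')) := Real.volume_Ioo.symm
      _ ≤ volume S := measure_mono hsub2

end Stmt9Aux

open Stmt9Aux

/-- Theorem 1.4 (a) with `b ≡ 1`.
The continuous odd rearrangement `v^t` (inverse of `ρ^t(λ) = tρ(λ) - (1-t)ρ(-λ)`)
preserves the potential energy `∫ G(v)` for every continuous even `G`. -/
theorem stmt_9 (L m : ℝ) (hL : 0 < L) (hm : 0 < m) (G v ρ : ℝ → ℝ) (vT : ℝ → ℝ → ℝ)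
    (hGc : Continuous G) (hGeven : ∀ s, G (-s) = G s)
    (hv : ContDiffOn ℝ 1 v (Icc (-L) L)) (hvmono : StrictMonoOn v (Icc (-L) L))
    (hvmaps : MapsTo v (Icc (-L) L) (Icc (-m) m))
    (hvL : v (-L) = -m) (hvR : v L = m)
    (hρmaps : MapsTo ρ (Icc (-m) m) (Icc (-L) L))
    (hρv : ∀ x ∈ Icc (-L) L, ρ (v x) = x)
    (hvρ : ∀ lam ∈ Icc (-m) m, v (ρ lam) = lam)
    (hT : ∀ t ∈ Icc (0:ℝ) 1,
      (MapsTo (vT t) (Icc (-L) L) (Icc (-m) m)) ∧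
      (∀ lam ∈ Icc (-m) m, vT t (t * ρ lam - (1 - t) * ρ (-lam)) = lam) ∧
      (∀ x ∈ Icc (-L) L, t * ρ (vT t x) - (1 - t) * ρ (-(vT t x)) = x)) :
    ∀ t ∈ Icc (0:ℝ) 1, (∫ x in (-L)..L, G (vT t x)) = ∫ x in (-L)..L, G (v x) := by
  intro t ht
  have hLL : -L ≤ L := by linarith
  have hmm : -m ≤ m := by linarith
  have hmemL : (-L) ∈ Icc (-L) L := ⟨le_rfl, hLL⟩
  have hmemR : L ∈ Icc (-L) L := ⟨hLL, le_rfl⟩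
  have hmemm : (-m) ∈ Icc (-m) m := ⟨le_rfl, hmm⟩
  have hmemM : m ∈ Icc (-m) m := ⟨hmm, le_rfl⟩
  -- basic facts about ρ
  have hρm : ρ (-m) = -L := by rw [← hvL]; exact hρv _ hmemL
  have hρM : ρ m = L := by rw [← hvR]; exact hρv _ hmemR
  have hρmono : StrictMonoOn ρ (Icc (-m) m) := by
    intro a ha b hb hab
    by_contra h
    push_neg at h
    have := hvmono.monotoneOn (hρmaps hb) (hρmaps ha) h
    rw [hvρ a ha, hvρ b hb] at this
    exact absurd hab (not_lt.2 this)
  have hneg : ∀ {a : ℝ}, a ∈ Icc (-m) m → (-a) ∈ Icc (-m) m := by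
    rintro a ⟨h1, h2⟩; exact ⟨by linarith, by linarith⟩
  -- the three pairs
  set w0 : ℝ → ℝ := fun x => -(v (-x)) with hw0def
  set σ0 : ℝ → ℝ := fun s => -(ρ (-s)) with hσ0def
  set σt : ℝ → ℝ := fun s => t * ρ s - (1 - t) * ρ (-s) with hσtdef
  obtain ⟨hTmaps, _hT2, hT3⟩ := hT t ht
  have hσt_sm : StrictMonoOn σt (Icc (-m) m) := by
    intro a ha b hb hab
    have hA : ρ a < ρ b := hρmono ha hb hab
    have hB : ρ (-b) < ρ (-a) := hρmono (hneg hb) (hneg ha) (by linarith)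
    have h1 : 0 ≤ t * (ρ b - ρ a) := mul_nonneg ht.1 (by linarith)
    have h2 : 0 ≤ (1 - t) * (ρ (-a) - ρ (-b)) := mul_nonneg (by linarith [ht.2]) (by linarith)
    rcases eq_or_lt_of_le ht.1 with h0 | h0
    · simp only [hσtdef, ← h0]; ring_nf; nlinarith
    · have h3 : 0 < t * (ρ b - ρ a) := mul_pos h0 (by linarith)
      simp only [hσtdef]; nlinarith
  have hσt_l : σt (-m) = -L := by simp only [hσtdef, hρm, neg_neg, hρM]; ring
  have hσt_r : σt m = L := by simp only [hσtdef, hρm, hρM]; ring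
  have hσ0_sm : StrictMonoOn σ0 (Icc (-m) m) := by
    intro a ha b hb hab
    have := hρmono (hneg hb) (hneg ha) (by linarith : -b < -a)
    simp only [hσ0def]; linarith
  have hσ0_l : σ0 (-m) = -L := by simp only [hσ0def, neg_neg, hρM]
  have hσ0_r : σ0 m = L := by simp only [hσ0def, hρm, neg_neg]
  have hw0maps : MapsTo w0 (Icc (-L) L) (Icc (-m) m) := by
    intro x hx
    have hx' : (-x) ∈ Icc (-L) L := ⟨by linarith [hx.2], by linarith [hx.1]⟩
    exact hneg (hvmaps hx')
  have hσ0w0 : ∀ x ∈ Icc (-L) L, σ0 (w0 x) = x := by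
    intro x hx
    have hx' : (-x) ∈ Icc (-L) L := ⟨by linarith [hx.2], by linarith [hx.1]⟩
    simp only [hσ0def, hw0def, neg_neg]
    rw [hρv _ hx']; ring
  have hσtwt : ∀ x ∈ Icc (-L) L, σt (vT t x) = x := hT3
  -- the restricted measure
  set μ : Measure ℝ := volume.restrict (Icc (-L) L) with hμdef
  haveI : IsFiniteMeasure μ := by
    constructor
    rw [hμdef, Measure.restrict_apply_univ]
    exact measure_Icc_lt_top
  -- clamped versions
  set vc : ℝ → ℝ := fun x => v (cl (-L) L x) with hvcdef
  set w0c : ℝ → ℝ := fun x => w0 (cl (-L) L x) with hw0cdef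
  set wtc : ℝ → ℝ := fun x => vT t (cl (-L) L x) with hwtcdef
  -- monotonicity/measurability of clamped versions
  have monoOf : ∀ {w σ : ℝ → ℝ}, StrictMonoOn σ (Icc (-m) m) →
      MapsTo w (Icc (-L) L) (Icc (-m) m) → (∀ x ∈ Icc (-L) L, σ (w x) = x) →
      Monotone (fun x => w (cl (-L) L x)) := by
    intro w σ hσ hw hσw
    have hwmono : MonotoneOn w (Icc (-L) L) := by
      intro x hx y hy hxy
      by_contra h
      push_neg at h
      have := hσ (hw hy) (hw hx) h
      rw [hσw x hx, hσw y hy] at this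
      exact absurd hxy (not_le.2 this)
    exact fun x y hxy => hwmono (cl_mem hLL x) (cl_mem hLL y) (cl_mono _ _ hxy)
  have hvc_mono : Monotone vc := by
    refine monoOf (σ := ρ) hρmono hvmaps hρv
  have hw0c_mono : Monotone w0c := monoOf (σ := σ0) hσ0_sm hw0maps hσ0w0
  have hwtc_mono : Monotone wtc := monoOf (σ := σt) hσt_sm hTmaps hσtwt
  -- the measure identity
  have hmeq : Measure.map wtc μ
      = ENNReal.ofReal t • Measure.map vc μ + ENNReal.ofReal (1 - t) • Measure.map w0c μ := by
    refine Measure.ext_of_Ioc' _ _ (fun c d hcd => ?_) (fun c d hcd => ?_)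
    · rw [hwtcdef, hμdef, key hL hm hσt_sm hσt_l hσt_r hTmaps hσtwt hcd.le]
      exact ENNReal.ofReal_ne_top
    · rw [hwtcdef, hμdef, key hL hm hσt_sm hσt_l hσt_r hTmaps hσtwt hcd.le]
      rw [Measure.add_apply, Measure.smul_apply, Measure.smul_apply, smul_eq_mul, smul_eq_mul,
        hvcdef, hw0cdef, key hL hm hρmono hρm hρM hvmaps hρv hcd.le,
        key hL hm hσ0_sm hσ0_l hσ0_r hw0maps hσ0w0 hcd.le]
      set c' := cl (-m) m c
      set d' := cl (-m) m d
      have hc' : c' ∈ Icc (-m) m := cl_mem hmm c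
      have hd' : d' ∈ Icc (-m) m := cl_mem hmm d
      have hc'd' : c' ≤ d' := cl_mono _ _ hcd.le
      have h1 : 0 ≤ ρ d' - ρ c' := sub_nonneg.2 (hρmono.monotoneOn hc' hd' hc'd')
      have h2 : 0 ≤ σ0 d' - σ0 c' := sub_nonneg.2 (hσ0_sm.monotoneOn hc' hd' hc'd')
      have ht1 : (0:ℝ) ≤ 1 - t := by linarith [ht.2]
      rw [← ENNReal.ofReal_mul ht.1, ← ENNReal.ofReal_mul ht1,
        ← ENNReal.ofReal_add (mul_nonneg ht.1 h1) (mul_nonneg ht1 h2)]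
      congr 1
      simp only [hσtdef, hσ0def]
      ring
  -- integrability of G against each pushforward
  have hGbound : ∃ C : ℝ, ∀ s ∈ Icc (-m) m, ‖G s‖ ≤ C :=
    isCompact_Icc.exists_bound_of_continuousOn hGc.continuousOn
  obtain ⟨C, hC⟩ := hGbound
  have intOf : ∀ {f : ℝ → ℝ}, Monotone f → (∀ x, f x ∈ Icc (-m) m) →
      Integrable G (Measure.map f μ) := by
    intro f hf hfm
    rw [integrable_map_measure hGc.aestronglyMeasurable hf.measurable.aemeasurable]
    refine Integrable.mono' (integrable_const C)
      (hGc.measurable.comp hf.measurable).aestronglyMeasurable ?_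
    filter_upwards with x
    exact hC _ (hfm x)
  have hvc_in : ∀ x, vc x ∈ Icc (-m) m := fun x => hvmaps (cl_mem hLL x)
  have hw0c_in : ∀ x, w0c x ∈ Icc (-m) m := fun x => hw0maps (cl_mem hLL x)
  have hwtc_in : ∀ x, wtc x ∈ Icc (-m) m := fun x => hTmaps (cl_mem hLL x)
  -- convert interval integrals to integrals against pushforwards
  have conv : ∀ {f fc : ℝ → ℝ}, Monotone fc → (∀ x ∈ Icc (-L) L, fc x = f x) →
      (∫ x in (-L)..L, G (f x)) = ∫ y, G y ∂(Measure.map fc μ) := by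
    intro f fc hfc hagree
    rw [integral_of_le hLL, ← integral_Icc_eq_integral_Ioc,
      integral_map hfc.measurable.aemeasurable hGc.aestronglyMeasurable]
    exact setIntegral_congr_fun measurableSet_Icc (fun x hx => by rw [hagree x hx])
  have hagree_v : ∀ x ∈ Icc (-L) L, vc x = v x := fun x hx => by
    rw [hvcdef]; simp only; rw [cl_of_mem hx]
  have hagree_w0 : ∀ x ∈ Icc (-L) L, w0c x = w0 x := fun x hx => by
    rw [hw0cdef]; simp only; rw [cl_of_mem hx]
  have hagree_wt : ∀ x ∈ Icc (-L) L, wtc x = vT t x := fun x hx => by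
    rw [hwtcdef]; simp only; rw [cl_of_mem hx]
  have e1 : (∫ x in (-L)..L, G (vT t x)) = ∫ y, G y ∂(Measure.map wtc μ) :=
    conv hwtc_mono hagree_wt
  have e2 : (∫ x in (-L)..L, G (v x)) = ∫ y, G y ∂(Measure.map vc μ) :=
    conv hvc_mono hagree_v
  have e3 : (∫ x in (-L)..L, G (w0 x)) = ∫ y, G y ∂(Measure.map w0c μ) :=
    conv hw0c_mono hagree_w0
  -- ∫ G(w0) = ∫ G(v) by evenness and reflection
  have e4 : (∫ x in (-L)..L, G (w0 x)) = ∫ x in (-L)..L, G (v x) := by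
    have : (∫ x in (-L)..L, G (w0 x)) = ∫ x in (-L)..L, G (v (-x)) := by
      refine intervalIntegral.integral_congr (fun x _ => ?_)
      simp only [hw0def]
      exact hGeven _
    rw [this, intervalIntegral.integral_comp_neg (fun x => G (v x)), neg_neg]
  -- put it together
  rw [e1, hmeq, integral_add_measure
    ((intOf hvc_mono hvc_in).smul_measure ENNReal.ofReal_ne_top)
    ((intOf hw0c_mono hw0c_in).smul_measure ENNReal.ofReal_ne_top),
    MeasureTheory.integral_smul_measure, MeasureTheory.integral_smul_measure,
    ENNReal.toReal_ofReal ht.1, ENNReal.toReal_ofReal (by linarith [ht.2] : (0:ℝ) ≤ 1 - t),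
    ← e2, ← e3, e4]
  simp only [smul_eq_mul]
  ring
end

section
/- Let $L, m > 0$, let $a \in C^0([-L,L])$ be even and positive with $\sqrt{a}$ convex, and let $v \in C^1([-L,L])$ be strictly increasing with $v(L) = -v(-L) = m$. For $t \in [0,1]$ let $v^t$ be the continuous odd rearrangement of $v$ (inverse of $\rho^t(\lambda) = t\rho(\lambda) - (1-t)\rho(-\lambda)$, $\rho = v^{-1}$). Then for all $t \in [0,1]$: $\int_{-L}^L \left(\frac{dv^t}{dx}\right)^2 a(x)\,dx \le \int_{-L}^L \left(\frac{dv}{dx}\right)^2 a(x)\,dx$. -/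
/-!
Put `λ = v^t(x)`, so that `x = ρ^t(λ) = t ρ(λ) + (1 - t) (-ρ(-λ))`, and write
`H(λ) = t (v' a)(ρ λ) + (1 - t) (v' a)(ρ (-λ))`. The heart of the proof is the pointwise bound
`(v^t)'(x)² a(x) ≤ (v^t)'(x) H(λ)`. If one of the two terms of
`(ρ^t)'(λ) = t / v'(ρ λ) + (1 - t) / v'(ρ (-λ))` is infinite, then `(v^t)'(x) = 0`. Otherwise
`(v^t)' = 1 / (ρ^t)'`, and the bound reads `a(x) ≤ (ρ^t)'(λ) H(λ)`: convexity of `√a` and evenness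
of `a` give `√a(x) ≤ t √a(ρ λ) + (1 - t) √a(ρ (-λ))`, and the Cauchy–Schwarz inequality
`(t s₁ + (1 - t) s₂)² ≤ (t / V₁ + (1 - t) / V₂) (t V₁ s₁² + (1 - t) V₂ s₂²)` finishes.
Integrating and substituting `λ = v^t(x)` gives `∫ (v^t)'² a ≤ ∫_{-m}^m H`; since `[-m, m]` is
symmetric, `∫ H = ∫ (v' a)∘ρ`, which is `∫ v'² a` after substituting `λ = v(x)`.
-/

open Set intervalIntegral Filter Topology Asymptotics MeasureTheory

section InverseDerivative

variable {𝕜 : Type*} [NontriviallyNormedField 𝕜] {f g : 𝕜 → 𝕜}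

theorem hasDerivAt_zero_of_isLittleO_leftInverse {x : 𝕜} (hf : ContinuousAt f x)
    (hgf : ∀ᶠ y in 𝓝 x, g (f y) = y)
    (hg : (fun z => z - f x) =o[𝓝 (f x)] fun z => g z - g (f x)) : HasDerivAt f 0 x := by
  rw [hasDerivAt_iff_isLittleO]
  refine (hg.comp_tendsto hf).congr' (.of_forall fun y => by simp) ?_
  filter_upwards [hgf] with y hy
  simp [hy, hgf.self_of_nhds]

theorem isLittleO_sub_of_hasDerivAt_zero {y : 𝕜} (hf : HasDerivAt f 0 (g y))
    (hg : ContinuousAt g y) (hfg : ∀ᶠ z in 𝓝 y, f (g z) = z) :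
    (fun z => z - y) =o[𝓝 y] fun z => g z - g y := by
  refine ((hasDerivAt_iff_isLittleO.1 hf).comp_tendsto hg).congr' ?_ (.of_forall fun _ => rfl)
  filter_upwards [hfg] with z hz
  simp [hz, hfg.self_of_nhds]

theorem hasDerivAt_const_mul_of_leftInverse {f' c y : 𝕜} (hg : ContinuousAt g y)
    (hf : HasDerivAt f f' (g y)) (hfg : ∀ᶠ z in 𝓝 y, f (g z) = z) (h : c = 0 ∨ f' ≠ 0) :
    HasDerivAt (fun z => c * g z) (c / f') y := by
  rcases h with rfl | h
  · simpa using hasDerivAt_const y (0 : 𝕜)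
  · simpa [div_eq_mul_inv] using (hf.of_local_left_inverse hg h hfg).const_mul c

end InverseDerivative

section MonotoneInverse

theorem strictMonoOn_of_leftInvOn {α β : Type*} [Preorder α] [LinearOrder β] {f : α → β}
    {g : β → α} {s : Set α} {t : Set β} (hg : MonotoneOn g t) (hf : MapsTo f s t)
    (hgf : LeftInvOn g f s) : StrictMonoOn f s := by
  intro x hx y hy hxy
  by_contra! h
  have := hg (hf hy) (hf hx) h
  rw [hgf hx, hgf hy] at this
  exact hxy.not_ge this

theorem StrictMonoOn.continuousOn_of_ordConnected {α β : Type*} [LinearOrder α]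
    [TopologicalSpace α] [OrderTopology α] [LinearOrder β] [TopologicalSpace β] [OrderTopology β]
    {f : α → β} {s : Set α} (hf : StrictMonoOn f s) (hs : s.OrdConnected)
    (hfs : (f '' s).OrdConnected) : ContinuousOn f s := by
  rw [continuousOn_iff_continuous_domRestrict]
  exact continuous_subtype_val.comp (hf.orderIso f s).continuous

theorem continuousOn_Icc_of_invOn {f g : ℝ → ℝ} {a b c d : ℝ} (hg : MonotoneOn g (Icc c d))
    (hf : MapsTo f (Icc a b) (Icc c d)) (hg' : MapsTo g (Icc c d) (Icc a b))
    (hfg : InvOn g f (Icc a b) (Icc c d)) : ContinuousOn f (Icc a b) := by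
  refine (strictMonoOn_of_leftInvOn hg hf hfg.1).continuousOn_of_ordConnected ordConnected_Icc ?_
  rw [(hfg.2.surjOn hg').image_eq_of_mapsTo hf]
  exact ordConnected_Icc

theorem mapsTo_Ioo_of_leftInvOn {α β : Type*} [PartialOrder α] [PartialOrder β] {f : α → β}
    {g : β → α} {a b : α} {c d : β} (hf : MapsTo f (Icc a b) (Icc c d))
    (hgf : LeftInvOn g f (Icc a b)) (hc : g c = a) (hd : g d = b) :
    MapsTo f (Ioo a b) (Ioo c d) := by
  intro x hx
  have hgfx := hgf (Ioo_subset_Icc_self hx)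
  obtain ⟨h₁, h₂⟩ := hf (Ioo_subset_Icc_self hx)
  refine ⟨h₁.lt_of_ne fun h => hx.1.ne ?_, h₂.lt_of_ne fun h => hx.2.ne ?_⟩
  · rw [← hgfx, ← h, hc]
  · rw [← hgfx, h, hd]

theorem continuousOn_endpoints_mapsTo_Ioo_of_invOn {f g : ℝ → ℝ} {a b c d : ℝ} (hab : a ≤ b)
    (hg : MonotoneOn g (Icc c d)) (hgc : g c = a) (hgd : g d = b)
    (hf : MapsTo f (Icc a b) (Icc c d)) (hfg : InvOn g f (Icc a b) (Icc c d)) :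
    ContinuousOn f (Icc a b) ∧ f a = c ∧ f b = d ∧ MapsTo f (Ioo a b) (Ioo c d) := by
  have hcd : c ≤ d := (hf (left_mem_Icc.2 hab)).1.trans (hf (left_mem_Icc.2 hab)).2
  have hg' : MapsTo g (Icc c d) (Icc a b) := fun y hy =>
    ⟨hgc ▸ hg (left_mem_Icc.2 hcd) hy hy.1, hgd ▸ hg hy (right_mem_Icc.2 hcd) hy.2⟩
  exact ⟨continuousOn_Icc_of_invOn hg hf hg' hfg, hgc ▸ hfg.2 (left_mem_Icc.2 hcd),
    hgd ▸ hfg.2 (right_mem_Icc.2 hcd), mapsTo_Ioo_of_leftInvOn hf hfg.1 hgc hgd⟩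

end MonotoneInverse

section SymmetricInterval

variable {α : Type*} [AddCommGroup α] [PartialOrder α] [IsOrderedAddMonoid α] {m μ : α}

theorem neg_mem_Icc_symm (h : μ ∈ Icc (-m) m) : -μ ∈ Icc (-m) m :=
  neg_mem_Icc_iff.2 (by rwa [neg_neg])

theorem neg_mem_Ioo_symm (h : μ ∈ Ioo (-m) m) : -μ ∈ Ioo (-m) m :=
  neg_mem_Ioo_iff.2 (by rwa [neg_neg])

end SymmetricInterval

theorem mul_add_mul_sq_le {p q V₁ V₂ x y : ℝ} (hp : 0 ≤ p) (hq : 0 ≤ q)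
    (h₁ : p = 0 ∨ 0 < V₁) (h₂ : q = 0 ∨ 0 < V₂) :
    (p * x + q * y) ^ 2 ≤ (p / V₁ + q / V₂) * (p * (V₁ * x ^ 2) + q * (V₂ * y ^ 2)) := by
  rcases h₁ with rfl | h₁ <;> rcases h₂ with rfl | h₂
  · simp
  · exact le_of_eq (by field_simp; ring)
  · exact le_of_eq (by field_simp; ring)
  · field_simp
    nlinarith [mul_nonneg (mul_nonneg hp hq) (sq_nonneg (V₁ * x - V₂ * y))]

theorem div_add_one_sub_div_pos {t V₁ V₂ : ℝ} (ht : t ∈ Icc (0 : ℝ) 1) (h₁ : t = 0 ∨ 0 < V₁)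
    (h₂ : 1 - t = 0 ∨ 0 < V₂) : 0 < t / V₁ + (1 - t) / V₂ := by
  rcases ht.1.eq_or_lt with rfl | ht₀
  · simpa using h₂.resolve_left (by norm_num)
  · have h₂' : 0 ≤ (1 - t) / V₂ := by
      rcases h₂ with h | h
      · simp [h]
      · exact div_nonneg (sub_nonneg.2 ht.2) h.le
    exact add_pos_of_pos_of_nonneg (div_pos ht₀ (h₁.resolve_left ht₀.ne')) h₂'

theorem le_mul_of_convexOn_sqrt {a : ℝ → ℝ} {s : Set ℝ} (hsqrt : ConvexOn ℝ s fun x => √(a x))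
    (ha : ∀ x ∈ s, 0 ≤ a x) {x₁ x₂ t V₁ V₂ : ℝ} (hx₁ : x₁ ∈ s) (hx₂ : x₂ ∈ s)
    (ht : t ∈ Icc (0 : ℝ) 1) (h₁ : t = 0 ∨ 0 < V₁) (h₂ : 1 - t = 0 ∨ 0 < V₂) :
    a (t * x₁ + (1 - t) * x₂) ≤
      (t / V₁ + (1 - t) / V₂) * (t * (V₁ * a x₁) + (1 - t) * (V₂ * a x₂)) := by
  have ht' : 0 ≤ 1 - t := sub_nonneg.2 ht.2
  have hconv : √(a (t * x₁ + (1 - t) * x₂)) ≤ t * √(a x₁) + (1 - t) * √(a x₂) :=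
    hsqrt.2 hx₁ hx₂ ht.1 ht' (by ring)
  have hmem : t * x₁ + (1 - t) * x₂ ∈ s := hsqrt.1 hx₁ hx₂ ht.1 ht' (by ring)
  calc a (t * x₁ + (1 - t) * x₂) = √(a (t * x₁ + (1 - t) * x₂)) ^ 2 :=
        (Real.sq_sqrt (ha _ hmem)).symm
    _ ≤ (t * √(a x₁) + (1 - t) * √(a x₂)) ^ 2 := pow_le_pow_left₀ (Real.sqrt_nonneg _) hconv 2
    _ ≤ _ := by
        simpa only [Real.sq_sqrt (ha _ hx₁), Real.sq_sqrt (ha _ hx₂)] using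
          mul_add_mul_sq_le (x := √(a x₁)) (y := √(a x₂)) ht.1 ht' h₁ h₂

theorem ContinuousOn.comp_neg_Icc {g : ℝ → ℝ} {m : ℝ} (hg : ContinuousOn g (Icc (-m) m)) :
    ContinuousOn (fun l => g (-l)) (Icc (-m) m) :=
  hg.comp continuous_neg.continuousOn fun _ => neg_mem_Icc_symm

theorem integral_Icc_mul_add_mul_comp_neg {g : ℝ → ℝ} {m : ℝ} (hm : 0 ≤ m)
    (hg : ContinuousOn g (Icc (-m) m)) (t : ℝ) :
    ∫ l in Icc (-m) m, (t * g l + (1 - t) * g (-l)) = ∫ l in Icc (-m) m, g l := by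
  have hneg : ∫ l in Icc (-m) m, g (-l) = ∫ l in Icc (-m) m, g l := by
    rw [integral_Icc_eq_integral_Ioc, ← integral_of_le (by linarith), integral_comp_neg, neg_neg,
      integral_of_le (by linarith), integral_Icc_eq_integral_Ioc]
  rw [integral_add (hg.integrableOn_Icc.const_mul t)
    (hg.comp_neg_Icc.integrableOn_Icc.const_mul _), MeasureTheory.integral_const_mul,
    MeasureTheory.integral_const_mul, hneg]
  ring

theorem intervalIntegral_deriv_sq_mul_le {a w H : ℝ → ℝ} {α β γ δ : ℝ} (hαβ : α ≤ β)
    (hwc : ContinuousOn w (Icc α β)) (hwα : w α = γ) (hwβ : w β = δ)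
    (ha : ∀ x ∈ Ioo α β, 0 ≤ a x) (hH : IntegrableOn H (Icc γ δ))
    (hw : ∀ x ∈ Ioo α β, ∃ d, HasDerivAt w d x ∧ 0 ≤ d ∧ d ^ 2 * a x ≤ d * H (w x)) :
    ∫ x in α..β, deriv w x ^ 2 * a x ≤ ∫ l in Icc γ δ, H l := by
  choose! d hwd hd₀ hd using hw
  subst hwα hwβ
  calc ∫ x in α..β, deriv w x ^ 2 * a x = ∫ x in Ioo α β, d x ^ 2 * a x := by
        rw [integral_of_le hαβ, integral_Ioc_eq_integral_Ioo]
        exact setIntegral_congr_fun measurableSet_Ioo fun x hx => by rw [(hwd x hx).deriv]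
    _ ≤ ∫ x in Ioo α β, d x • H (w x) := by
        refine integral_mono_of_nonneg (ae_restrict_of_forall_mem measurableSet_Ioo
          fun x hx => mul_nonneg (sq_nonneg _) (ha x hx)) ?_
          (ae_restrict_of_forall_mem measurableSet_Ioo hd)
        exact ((integrableOn_Icc_deriv_smul_iff_of_deriv_nonneg hwc hwd hd₀ hαβ).2 hH).mono_set
          Ioo_subset_Icc_self
    _ = ∫ l in Icc (w α) (w β), H l := by
        rw [← integral_Icc_eq_integral_Ioo, integral_Icc_deriv_smul_of_deriv_nonneg hwc hwd hd₀ hαβ]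

theorem intervalIntegral_deriv_sq_mul_eq {a v ρ V : ℝ → ℝ} {α β γ δ : ℝ} (hαβ : α ≤ β)
    (hvc : ContinuousOn v (Icc α β)) (hvα : v α = γ) (hvβ : v β = δ)
    (hvd : ∀ x ∈ Ioo α β, HasDerivAt v (V x) x) (hV : ∀ x ∈ Ioo α β, 0 ≤ V x)
    (hρv : ∀ x ∈ Icc α β, ρ (v x) = x) :
    ∫ x in α..β, deriv v x ^ 2 * a x = ∫ l in Icc γ δ, V (ρ l) * a (ρ l) := by
  rw [← hvα, ← hvβ, ← integral_Icc_deriv_smul_of_deriv_nonneg hvc hvd hV hαβ,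
    integral_Icc_eq_integral_Ioo, integral_of_le hαβ, integral_Ioc_eq_integral_Ioo]
  refine setIntegral_congr_fun measurableSet_Ioo fun x hx => ?_
  simp only [smul_eq_mul, hρv x (Ioo_subset_Icc_self hx), (hvd x hx).deriv]
  ring

/-- The map `ρ^t` of the paper, whose inverse is the continuous odd rearrangement `v^t`. -/
def oddRearrInv (ρ : ℝ → ℝ) (t μ : ℝ) : ℝ := t * ρ μ - (1 - t) * ρ (-μ)

section OddRearrInv

variable {v ρ : ℝ → ℝ} {L m t l : ℝ}

theorem monotoneOn_oddRearrInv (hρ : MonotoneOn ρ (Icc (-m) m)) (ht : t ∈ Icc (0 : ℝ) 1) :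
    MonotoneOn (oddRearrInv ρ t) (Icc (-m) m) := by
  intro p hp q hq hpq
  have h₁ := mul_le_mul_of_nonneg_left (hρ hp hq hpq) ht.1
  have h₂ := mul_le_mul_of_nonneg_left (hρ (neg_mem_Icc_symm hq) (neg_mem_Icc_symm hp)
    (neg_le_neg hpq)) (sub_nonneg.2 ht.2)
  simp only [oddRearrInv]
  linarith

theorem oddRearrInv_neg_eq_of_endpoints (hρm : ρ (-m) = -L) (hρM : ρ m = L) :
    oddRearrInv ρ t (-m) = -L := by
  simp only [oddRearrInv, neg_neg, hρm, hρM]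
  ring

theorem oddRearrInv_eq_of_endpoints (hρm : ρ (-m) = -L) (hρM : ρ m = L) :
    oddRearrInv ρ t m = L := by
  simp only [oddRearrInv, hρm, hρM]
  ring

theorem abs_le_abs_oddRearrInv_sub (hρ : MonotoneOn ρ (Icc (-m) m)) (ht : t ∈ Icc (0 : ℝ) 1)
    {μ : ℝ} (hμ : μ ∈ Icc (-m) m) (hl : l ∈ Icc (-m) m) :
    |t * (ρ μ - ρ l)| ≤ |oddRearrInv ρ t μ - oddRearrInv ρ t l| ∧
      |(1 - t) * (ρ (-μ) - ρ (-l))| ≤ |oddRearrInv ρ t μ - oddRearrInv ρ t l| := by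
  have ht' : 0 ≤ 1 - t := sub_nonneg.2 ht.2
  have hsplit : oddRearrInv ρ t μ - oddRearrInv ρ t l =
      t * (ρ μ - ρ l) - (1 - t) * (ρ (-μ) - ρ (-l)) := by
    simp only [oddRearrInv]
    ring
  rw [hsplit]
  rcases le_total μ l with h | h
  · have hA : t * (ρ μ - ρ l) ≤ 0 :=
      mul_nonpos_of_nonneg_of_nonpos ht.1 (sub_nonpos.2 (hρ hμ hl h))
    have hB : 0 ≤ (1 - t) * (ρ (-μ) - ρ (-l)) := mul_nonneg ht'
      (sub_nonneg.2 (hρ (neg_mem_Icc_symm hl) (neg_mem_Icc_symm hμ) (neg_le_neg h)))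
    rw [abs_of_nonpos hA, abs_of_nonneg hB, abs_of_nonpos (by linarith)]
    constructor <;> linarith
  · have hA : 0 ≤ t * (ρ μ - ρ l) := mul_nonneg ht.1 (sub_nonneg.2 (hρ hl hμ h))
    have hB : (1 - t) * (ρ (-μ) - ρ (-l)) ≤ 0 := mul_nonpos_of_nonneg_of_nonpos ht'
      (sub_nonpos.2 (hρ (neg_mem_Icc_symm hμ) (neg_mem_Icc_symm hl) (neg_le_neg h)))
    rw [abs_of_nonneg hA, abs_of_nonpos hB, abs_of_nonneg (by linarith)]
    constructor <;> linarith

theorem isLittleO_oddRearrInv_sub (hρ : MonotoneOn ρ (Icc (-m) m))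
    (hρc : ContinuousOn ρ (Icc (-m) m)) (hvρ : ∀ μ ∈ Icc (-m) m, v (ρ μ) = μ)
    (ht : t ∈ Icc (0 : ℝ) 1) (hl : l ∈ Ioo (-m) m)
    (hdeg : 0 < t ∧ HasDerivAt v 0 (ρ l) ∨ t < 1 ∧ HasDerivAt v 0 (ρ (-l))) :
    (fun μ => μ - l) =o[𝓝 l] fun μ => oddRearrInv ρ t μ - oddRearrInv ρ t l := by
  have hIcc : Icc (-m) m ∈ 𝓝 l := Icc_mem_nhds hl.1 hl.2
  have hIcc' : Icc (-m) m ∈ 𝓝 (-l) := Icc_mem_nhds (neg_mem_Ioo_symm hl).1 (neg_mem_Ioo_symm hl).2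
  have hbound := fun {μ} (hμ : μ ∈ Icc (-m) m) =>
    abs_le_abs_oddRearrInv_sub hρ ht hμ (Ioo_subset_Icc_self hl)
  rcases hdeg with ⟨ht₀, hv⟩ | ⟨ht₁, hv⟩
  · have ho := isLittleO_sub_of_hasDerivAt_zero hv (hρc.continuousAt hIcc)
      (eventually_of_mem hIcc hvρ)
    refine (ho.const_mul_right' ht₀.ne'.isUnit).trans_isBigO (IsBigO.of_bound 1 ?_)
    filter_upwards [hIcc] with μ hμ
    simpa [Real.norm_eq_abs] using (hbound hμ).1
  · have ho := (isLittleO_sub_of_hasDerivAt_zero hv (hρc.continuousAt hIcc')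
      (eventually_of_mem hIcc' hvρ)).comp_tendsto (tendsto_neg l)
    refine ((ho.neg_left.congr_left fun μ => by simp; ring).const_mul_right'
      (sub_pos.2 ht₁).ne'.isUnit).trans_isBigO (IsBigO.of_bound 1 ?_)
    filter_upwards [hIcc] with μ hμ
    simpa [Real.norm_eq_abs] using (hbound hμ).2

theorem hasDerivAt_oddRearrInv {V₁ V₂ : ℝ} (hρc : ContinuousOn ρ (Icc (-m) m))
    (hvρ : ∀ μ ∈ Icc (-m) m, v (ρ μ) = μ) (hl : l ∈ Ioo (-m) m)
    (hv₁ : HasDerivAt v V₁ (ρ l)) (hv₂ : HasDerivAt v V₂ (ρ (-l)))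
    (h₁ : t = 0 ∨ V₁ ≠ 0) (h₂ : 1 - t = 0 ∨ V₂ ≠ 0) :
    HasDerivAt (oddRearrInv ρ t) (t / V₁ + (1 - t) / V₂) l := by
  have hIcc : Icc (-m) m ∈ 𝓝 l := Icc_mem_nhds hl.1 hl.2
  have hIcc' : Icc (-m) m ∈ 𝓝 (-l) := Icc_mem_nhds (neg_mem_Ioo_symm hl).1 (neg_mem_Ioo_symm hl).2
  have d₁ := hasDerivAt_const_mul_of_leftInverse (hρc.continuousAt hIcc) hv₁
    (eventually_of_mem hIcc hvρ) h₁
  have d₂ := (hasDerivAt_const_mul_of_leftInverse (hρc.continuousAt hIcc') hv₂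
    (eventually_of_mem hIcc' hvρ) h₂).comp l (hasDerivAt_neg l)
  rw [show t / V₁ + (1 - t) / V₂ = t / V₁ - (1 - t) / V₂ * -1 by ring]
  exact d₁.sub d₂

theorem exists_hasDerivAt_sq_mul_le {a V w : ℝ → ℝ}
    (ht : t ∈ Icc (0 : ℝ) 1) (haeven : ∀ y, a (-y) = a y) (hapos : ∀ y ∈ Icc (-L) L, 0 < a y)
    (hsqrt : ConvexOn ℝ (Icc (-L) L) fun y => √(a y))
    (hvd : ∀ y ∈ Ioo (-L) L, HasDerivAt v (V y) y) (hV : ∀ y ∈ Ioo (-L) L, 0 ≤ V y)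
    (hρ : MonotoneOn ρ (Icc (-m) m)) (hρc : ContinuousOn ρ (Icc (-m) m))
    (hρIoo : MapsTo ρ (Ioo (-m) m) (Ioo (-L) L)) (hvρ : ∀ μ ∈ Icc (-m) m, v (ρ μ) = μ)
    (hwc : ContinuousOn w (Icc (-L) L)) (hwIoo : MapsTo w (Ioo (-L) L) (Ioo (-m) m))
    (hρw : ∀ y ∈ Icc (-L) L, oddRearrInv ρ t (w y) = y) {x : ℝ} (hx : x ∈ Ioo (-L) L) :
    ∃ d, HasDerivAt w d x ∧ 0 ≤ d ∧ d ^ 2 * a x ≤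
      d * (t * (V (ρ (w x)) * a (ρ (w x))) + (1 - t) * (V (ρ (-w x)) * a (ρ (-w x)))) := by
  have hxnhds : Icc (-L) L ∈ 𝓝 x := Icc_mem_nhds hx.1 hx.2
  have hwx := hwIoo hx
  have hx₁ := hρIoo hwx
  have hx₂ := hρIoo (neg_mem_Ioo_symm hwx)
  by_cases hdeg : 0 < t ∧ V (ρ (w x)) = 0 ∨ t < 1 ∧ V (ρ (-w x)) = 0
  · refine ⟨0, hasDerivAt_zero_of_isLittleO_leftInverse (hwc.continuousAt hxnhds)
      (eventually_of_mem hxnhds hρw) ?_, le_rfl, by simp⟩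
    refine isLittleO_oddRearrInv_sub hρ hρc hvρ ht hwx ?_
    rcases hdeg with ⟨h, hV₁⟩ | ⟨h, hV₂⟩
    · exact .inl ⟨h, hV₁ ▸ hvd _ hx₁⟩
    · exact .inr ⟨h, hV₂ ▸ hvd _ hx₂⟩
  simp only [not_or, not_and] at hdeg
  have h₁ : t = 0 ∨ 0 < V (ρ (w x)) := or_iff_not_imp_left.2 fun h =>
    (hV _ hx₁).lt_of_ne' (hdeg.1 (ht.1.lt_of_ne' h))
  have h₂ : 1 - t = 0 ∨ 0 < V (ρ (-w x)) := or_iff_not_imp_left.2 fun h =>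
    (hV _ hx₂).lt_of_ne' (hdeg.2 (ht.2.lt_of_ne fun e => h (by rw [e, sub_self])))
  have hQ := div_add_one_sub_div_pos ht h₁ h₂
  have hd := (hasDerivAt_oddRearrInv hρc hvρ hwx (hvd _ hx₁) (hvd _ hx₂)
    (h₁.imp_right ne_of_gt) (h₂.imp_right ne_of_gt)).of_local_left_inverse
    (hwc.continuousAt hxnhds) hQ.ne' (eventually_of_mem hxnhds hρw)
  refine ⟨_, hd, inv_nonneg.2 hQ.le, ?_⟩
  have key := le_mul_of_convexOn_sqrt hsqrt (fun y hy => (hapos y hy).le)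
    (Ioo_subset_Icc_self hx₁) (neg_mem_Icc_symm (Ioo_subset_Icc_self hx₂)) ht h₁ h₂
  have hxw : t * ρ (w x) + (1 - t) * -ρ (-w x) = x := by
    have h := hρw x (Ioo_subset_Icc_self hx)
    rw [oddRearrInv] at h
    linear_combination h
  rw [haeven, hxw, ← inv_mul_le_iff₀ hQ] at key
  rw [sq, mul_assoc]
  exact mul_le_mul_of_nonneg_left key (inv_nonneg.2 hQ.le)

end OddRearrInv

theorem stmt_10_general (L m : ℝ) (hL : 0 < L) (hm : 0 < m) (a v ρ : ℝ → ℝ) (vT : ℝ → ℝ → ℝ)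
    (hac : ContinuousOn a (Icc (-L) L)) (haeven : ∀ x, a (-x) = a x)
    (hapos : ∀ x ∈ Icc (-L) L, 0 < a x)
    (hsqrt : ConvexOn ℝ (Icc (-L) L) (fun x => Real.sqrt (a x)))
    (hv : ContDiffOn ℝ 1 v (Icc (-L) L)) (hvmono : StrictMonoOn v (Icc (-L) L))
    (hvL : v (-L) = -m) (hvR : v L = m)
    (hρmaps : MapsTo ρ (Icc (-m) m) (Icc (-L) L))
    (hρv : ∀ x ∈ Icc (-L) L, ρ (v x) = x)
    (hvρ : ∀ lam ∈ Icc (-m) m, v (ρ lam) = lam)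
    (hT : ∀ t ∈ Icc (0:ℝ) 1,
      (MapsTo (vT t) (Icc (-L) L) (Icc (-m) m)) ∧
      (∀ lam ∈ Icc (-m) m, vT t (t * ρ lam - (1 - t) * ρ (-lam)) = lam) ∧
      (∀ x ∈ Icc (-L) L, t * ρ (vT t x) - (1 - t) * ρ (-(vT t x)) = x)) :
    ∀ t ∈ Icc (0:ℝ) 1,
      (∫ x in (-L)..L, (deriv (vT t) x) ^ 2 * a x) ≤
        ∫ x in (-L)..L, (deriv v x) ^ 2 * a x := by
  intro t ht
  obtain ⟨hwmaps, hwρ, hρw⟩ := hT t ht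
  have hLL : -L ≤ L := by linarith
  set V := derivWithin v (Icc (-L) L)
  have hvd : ∀ x ∈ Ioo (-L) L, HasDerivAt v (V x) x := fun x hx =>
    ((hv.differentiableOn one_ne_zero) x (Ioo_subset_Icc_self hx)).hasDerivWithinAt.hasDerivAt
      (Icc_mem_nhds hx.1 hx.2)
  have hV : ∀ x ∈ Ioo (-L) L, 0 ≤ V x := fun _ _ => hvmono.monotoneOn.derivWithin_nonneg
  have hρ := (strictMonoOn_of_leftInvOn hvmono.monotoneOn hρmaps hvρ).monotoneOn
  obtain ⟨hρc, hρm, hρM, hρIoo⟩ := continuousOn_endpoints_mapsTo_Ioo_of_invOn (by linarith)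
    hvmono.monotoneOn hvL hvR hρmaps ⟨hvρ, hρv⟩
  obtain ⟨hwc, hwL, hwR, hwIoo⟩ := continuousOn_endpoints_mapsTo_Ioo_of_invOn hLL
    (monotoneOn_oddRearrInv hρ ht) (oddRearrInv_neg_eq_of_endpoints hρm hρM)
    (oddRearrInv_eq_of_endpoints hρm hρM) hwmaps ⟨hρw, hwρ⟩
  have hg : ContinuousOn (fun l => V (ρ l) * a (ρ l)) (Icc (-m) m) :=
    ((hv.continuousOn_derivWithin (uniqueDiffOn_Icc (by linarith)) le_rfl).comp hρc hρmaps).mul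
      (hac.comp hρc hρmaps)
  calc ∫ x in (-L)..L, deriv (vT t) x ^ 2 * a x
      ≤ ∫ l in Icc (-m) m, (t * (V (ρ l) * a (ρ l)) + (1 - t) * (V (ρ (-l)) * a (ρ (-l)))) :=
        intervalIntegral_deriv_sq_mul_le hLL hwc hwL hwR
          (fun x hx => (hapos x (Ioo_subset_Icc_self hx)).le)
          ((continuousOn_const.mul hg).add
            (continuousOn_const.mul hg.comp_neg_Icc)).integrableOn_Icc
          fun _ => exists_hasDerivAt_sq_mul_le ht haeven hapos hsqrt hvd hV hρ hρc hρIoo hvρ hwc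
            hwIoo hρw
    _ = ∫ l in Icc (-m) m, V (ρ l) * a (ρ l) := integral_Icc_mul_add_mul_comp_neg hm.le hg t
    _ = ∫ x in (-L)..L, deriv v x ^ 2 * a x :=
        (intervalIntegral_deriv_sq_mul_eq hLL hv.continuousOn hvL hvR hvd hV hρv).symm

/-- Pólya–Szegő type inequality, Lemma 2.3 of the paper.
If `a` is even, positive, with `√a` convex, and `v ∈ C¹([-L,L])` is strictly increasing
with `v(L) = -v(-L) = m`, then the continuous odd rearrangement `v^t` satisfies
`∫ (dv^t/dx)² a ≤ ∫ (dv/dx)² a` for all `t ∈ [0,1]`. -/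
theorem stmt_10 (L m : ℝ) (hL : 0 < L) (hm : 0 < m) (a v ρ : ℝ → ℝ) (vT : ℝ → ℝ → ℝ)
    (hac : ContinuousOn a (Icc (-L) L)) (haeven : ∀ x, a (-x) = a x)
    (hapos : ∀ x ∈ Icc (-L) L, 0 < a x)
    (hsqrt : ConvexOn ℝ (Icc (-L) L) (fun x => Real.sqrt (a x)))
    (hv : ContDiffOn ℝ 1 v (Icc (-L) L)) (hvmono : StrictMonoOn v (Icc (-L) L))
    (hvmaps : MapsTo v (Icc (-L) L) (Icc (-m) m))
    (hvL : v (-L) = -m) (hvR : v L = m)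
    (hρmaps : MapsTo ρ (Icc (-m) m) (Icc (-L) L))
    (hρv : ∀ x ∈ Icc (-L) L, ρ (v x) = x)
    (hvρ : ∀ lam ∈ Icc (-m) m, v (ρ lam) = lam)
    (hT : ∀ t ∈ Icc (0:ℝ) 1,
      (MapsTo (vT t) (Icc (-L) L) (Icc (-m) m)) ∧
      (∀ lam ∈ Icc (-m) m, vT t (t * ρ lam - (1 - t) * ρ (-lam)) = lam) ∧
      (∀ x ∈ Icc (-L) L, t * ρ (vT t x) - (1 - t) * ρ (-(vT t x)) = x)) :
    ∀ t ∈ Icc (0:ℝ) 1,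
      (∫ x in (-L)..L, (deriv (vT t) x) ^ 2 * a x) ≤
        ∫ x in (-L)..L, (deriv v x) ^ 2 * a x :=
  stmt_10_general L m hL hm a v ρ vT hac haeven hapos hsqrt hv hvmono hvL hvR hρmaps hρv hvρ hT
end

section
/- Let $L, m > 0$, let $a \in C^2((-L,L)) \cap C^0([-L,L])$ be even and positive with $\sqrt{a}$ convex, and let $v \in C^1([-L,L])$ be strictly increasing with $v' > 0$ and $v(L)=-v(-L)=m$. Then the function $h(t) := \frac{1}{2}\int_{-L}^L \left(\frac{dv^t}{dx}\right)^2 a(x)\,dx = \frac{1}{2}\int_{-m}^m \frac{a(\rho^t(\lambda))}{(\rho^t)'(\lambda)}\,d\lambda$ is convex on $[0,1]$, where $v^t$ is the continuous odd rearrangement of $v$ with inverse $\rho^t(\lambda) = t\rho(\lambda)-(1-t)\rho(-\lambda)$. -/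
/-!
For fixed `λ`, both `ρ^t λ` and `(ρ^t)' λ` are affine in `t`, so the integrand is
`u(t)² / d(t)` with `u(t) = √(a (ρ^t λ))` convex and nonnegative and `d > 0` affine. Such a
quotient is convex because `(u, d) ↦ u² / d` is jointly convex for `d > 0` and nondecreasing in
`u ≥ 0`, and integrating over `λ` preserves convexity. Integrability comes from the continuity
of `ρ' = 1 / (v' ∘ ρ)`.
-/

open Set MeasureTheory

theorem sq_add_div_add_le {α β u₀ u₁ d₀ d₁ : ℝ} (hα : 0 ≤ α) (hβ : 0 ≤ β)
    (hd₀ : 0 < d₀) (hd₁ : 0 < d₁) :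
    (α * u₀ + β * u₁) ^ 2 / (α * d₀ + β * d₁) ≤ α * (u₀ ^ 2 / d₀) + β * (u₁ ^ 2 / d₁) := by
  rcases (add_nonneg (mul_nonneg hα hd₀.le) (mul_nonneg hβ hd₁.le)).eq_or_lt with h | h
  · rw [← h, div_zero]
    positivity
  · rw [div_le_iff₀ h]
    field_simp
    nlinarith [mul_nonneg (mul_nonneg hα hβ) (sq_nonneg (u₀ * d₁ - u₁ * d₀))]

theorem ConvexOn.sq_div {E : Type*} [AddCommGroup E] [Module ℝ E] {s : Set E} {f g : E → ℝ}
    (hf : ConvexOn ℝ s f) (hf₀ : ∀ x ∈ s, 0 ≤ f x) (hg : ConcaveOn ℝ s g)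
    (hg₀ : ∀ x ∈ s, 0 < g x) : ConvexOn ℝ s fun x => f x ^ 2 / g x := by
  refine ⟨hf.1, fun x hx y hy α β hα hβ hαβ => ?_⟩
  have hxy := hf.1 hx hy hα hβ hαβ
  calc f (α • x + β • y) ^ 2 / g (α • x + β • y)
      ≤ (α * f x + β * f y) ^ 2 / (α * g x + β * g y) :=
        div_le_div₀ (sq_nonneg _) (pow_le_pow_left₀ (hf₀ _ hxy) (hf.2 hx hy hα hβ hαβ) 2)
          (by simpa using (convex_Ioi (0 : ℝ)) (hg₀ x hx) (hg₀ y hy) hα hβ hαβ)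
          (hg.2 hx hy hα hβ hαβ)
    _ ≤ α * (f x ^ 2 / g x) + β * (f y ^ 2 / g y) :=
        sq_add_div_add_le hα hβ (hg₀ x hx) (hg₀ y hy)

theorem convexOn_integral {E α : Type*} [AddCommGroup E] [Module ℝ E] [MeasurableSpace α]
    {μ : Measure α} {s : Set E} {F : E → α → ℝ} (hs : Convex ℝ s)
    (hF : ∀ᵐ x ∂μ, ConvexOn ℝ s (F · x)) (hint : ∀ t ∈ s, Integrable (F t) μ) :
    ConvexOn ℝ s fun t => ∫ x, F t x ∂μ := by
  refine ⟨hs, fun t₀ ht₀ t₁ ht₁ α β hα hβ hαβ => ?_⟩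
  calc ∫ x, F (α • t₀ + β • t₁) x ∂μ
      ≤ ∫ x, (α * F t₀ x + β * F t₁ x) ∂μ := by
        refine integral_mono_ae (hint _ (hs ht₀ ht₁ hα hβ hαβ))
          (((hint t₀ ht₀).const_mul α).add ((hint t₁ ht₁).const_mul β)) ?_
        filter_upwards [hF] with x hx
        exact hx.2 ht₀ ht₁ hα hβ hαβ
    _ = α • ∫ x, F t₀ x ∂μ + β • ∫ x, F t₁ x ∂μ := by
        rw [integral_add ((hint t₀ ht₀).const_mul α) ((hint t₁ ht₁).const_mul β),
          integral_const_mul, integral_const_mul, smul_eq_mul, smul_eq_mul]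

theorem mul_sub_one_sub_mul_mem_Icc {L t p q : ℝ} (ht : t ∈ Icc (0 : ℝ) 1)
    (hp : p ∈ Icc (-L) L) (hq : q ∈ Icc (-L) L) : t * p - (1 - t) * q ∈ Icc (-L) L := by
  obtain ⟨ht₀, ht₁⟩ := ht
  constructor <;> nlinarith [hp.1, hp.2, hq.1, hq.2]

theorem mul_add_one_sub_mul_pos {t r r' : ℝ} (ht : t ∈ Icc (0 : ℝ) 1) (hr : 0 < r)
    (hr' : 0 < r') : 0 < t * r + (1 - t) * r' := by
  simpa using (convex_Ioi (0 : ℝ)) hr hr' ht.1 (sub_nonneg.2 ht.2) (add_sub_cancel t 1)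

theorem convexOn_sub_div_add {L p q r r' : ℝ} {a : ℝ → ℝ}
    (ha : ∀ x ∈ Icc (-L) L, 0 < a x) (hsqrt : ConvexOn ℝ (Icc (-L) L) fun x => √(a x))
    (hp : p ∈ Icc (-L) L) (hq : q ∈ Icc (-L) L) (hr : 0 < r) (hr' : 0 < r') :
    ConvexOn ℝ (Icc 0 1) fun t => a (t * p - (1 - t) * q) / (t * r + (1 - t) * r') := by
  have hpath (t : ℝ) : AffineMap.lineMap (-q) p t = t * p - (1 - t) * q := by
    rw [AffineMap.lineMap_apply_ring]; ring
  have hu : ConvexOn ℝ (Icc 0 1) fun t => √(a (t * p - (1 - t) * q)) := by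
    refine ((hsqrt.comp_affineMap (AffineMap.lineMap (-q) p)).subset (fun t ht => ?_)
      (convex_Icc 0 1)).congr fun t _ => by simp [hpath]
    rw [mem_preimage, hpath]
    exact mul_sub_one_sub_mul_mem_Icc ht hp hq
  have hd : ConcaveOn ℝ (Icc 0 1) fun t => t * r + (1 - t) * r' :=
    ((LinearMap.concaveOn (LinearMap.id.smulRight (r - r')) (convex_Icc 0 1)).add_const r').congr
      fun t _ => by
        simp only [Pi.add_apply, LinearMap.smulRight_apply, LinearMap.id_apply, smul_eq_mul]; ring
  refine (hu.sq_div (fun _ _ => Real.sqrt_nonneg _) hd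
    fun t ht => mul_add_one_sub_mul_pos ht hr hr').congr fun t ht => ?_
  simp only [Real.sq_sqrt (ha _ (mul_sub_one_sub_mul_mem_Icc ht hp hq)).le]

theorem derivWithin_mul_eq_one_of_leftInvOn {s t : Set ℝ} {v ρ ρ' : ℝ → ℝ} {y : ℝ}
    (hs : UniqueDiffOn ℝ s) (hy : y ∈ s) (hv : DifferentiableWithinAt ℝ v t (ρ y))
    (hρ : MapsTo ρ s t) (hvρ : ∀ y ∈ s, v (ρ y) = y) (hρ' : HasDerivWithinAt ρ (ρ' y) s y) :
    derivWithin v t (ρ y) * ρ' y = 1 := by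
  have hcomp := hv.hasDerivWithinAt.comp y hρ' hρ
  have hid : HasDerivWithinAt (v ∘ ρ) 1 s y :=
    (hasDerivWithinAt_id y s).congr hvρ (hvρ y hy)
  exact (hcomp.derivWithin (hs y hy)).symm.trans (hid.derivWithin (hs y hy))

theorem continuousOn_of_hasDerivWithinAt_of_leftInvOn {s t : Set ℝ} {v ρ ρ' : ℝ → ℝ}
    (hs : UniqueDiffOn ℝ s) (ht : UniqueDiffOn ℝ t) (hv : ContDiffOn ℝ 1 v t)
    (hv' : ∀ x ∈ t, derivWithin v t x ≠ 0) (hρ : MapsTo ρ s t) (hvρ : ∀ y ∈ s, v (ρ y) = y)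
    (hρ' : ∀ y ∈ s, HasDerivWithinAt ρ (ρ' y) s y) : ContinuousOn ρ' s := by
  have hρc : ContinuousOn ρ s := fun y hy => (hρ' y hy).continuousWithinAt
  refine (((hv.continuousOn_derivWithin ht le_rfl).comp hρc hρ).inv₀
    fun y hy => hv' _ (hρ hy)).congr fun y hy => ?_
  refine eq_inv_of_mul_eq_one_left ?_
  rw [mul_comm]
  exact derivWithin_mul_eq_one_of_leftInvOn hs hy
    ((hv.differentiableOn one_ne_zero) _ (hρ hy)) hρ hvρ (hρ' y hy)

theorem stmt_11_general (L m : ℝ) (hL : 0 < L) (hm : 0 < m) (a v ρ ρ' : ℝ → ℝ)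
    (hac : ContinuousOn a (Icc (-L) L))
    (hapos : ∀ x ∈ Icc (-L) L, 0 < a x)
    (hsqrt : ConvexOn ℝ (Icc (-L) L) (fun x => Real.sqrt (a x)))
    (hv : ContDiffOn ℝ 1 v (Icc (-L) L))
    (hv' : ∀ x ∈ Icc (-L) L, 0 < derivWithin v (Icc (-L) L) x)
    (hρmaps : MapsTo ρ (Icc (-m) m) (Icc (-L) L))
    (hvρ : ∀ lam ∈ Icc (-m) m, v (ρ lam) = lam)
    (hρ' : ∀ lam ∈ Icc (-m) m, HasDerivWithinAt ρ (ρ' lam) (Icc (-m) m) lam)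
    (hρ'pos : ∀ lam ∈ Icc (-m) m, 0 < ρ' lam) :
    ConvexOn ℝ (Icc (0:ℝ) 1) (fun t =>
      (1/2) * ∫ lam in (-m)..m,
        a (t * ρ lam - (1 - t) * ρ (-lam)) / (t * ρ' lam + (1 - t) * ρ' (-lam))) := by
  have hmm : -m ≤ m := by linarith
  have hneg : MapsTo Neg.neg (Icc (-m) m) (Icc (-m) m) := fun _ h =>
    neg_mem_Icc_iff.mpr (by rwa [neg_neg])
  have hρc : ContinuousOn ρ (Icc (-m) m) := fun lam h => (hρ' lam h).continuousWithinAt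
  have hρ'c : ContinuousOn ρ' (Icc (-m) m) :=
    continuousOn_of_hasDerivWithinAt_of_leftInvOn (uniqueDiffOn_Icc (by linarith))
      (uniqueDiffOn_Icc (by linarith)) hv (fun x hx => (hv' x hx).ne') hρmaps hvρ hρ'
  have hconv (lam : ℝ) (h : lam ∈ Icc (-m) m) : ConvexOn ℝ (Icc 0 1) fun t =>
      a (t * ρ lam - (1 - t) * ρ (-lam)) / (t * ρ' lam + (1 - t) * ρ' (-lam)) :=
    convexOn_sub_div_add hapos hsqrt (hρmaps h) (hρmaps (hneg h)) (hρ'pos lam h)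
      (hρ'pos _ (hneg h))
  have hint (t : ℝ) (ht : t ∈ Icc (0 : ℝ) 1) : IntegrableOn
      (fun lam => a (t * ρ lam - (1 - t) * ρ (-lam)) / (t * ρ' lam + (1 - t) * ρ' (-lam)))
      (Icc (-m) m) :=
    ContinuousOn.integrableOn_Icc ((hac.comp (by fun_prop) fun lam h =>
      mul_sub_one_sub_mul_mem_Icc ht (hρmaps h) (hρmaps (hneg h))).div (by fun_prop)
      fun lam h => (mul_add_one_sub_mul_pos ht (hρ'pos lam h) (hρ'pos _ (hneg h))).ne')
  simp only [intervalIntegral.integral_of_le hmm, ← integral_Icc_eq_integral_Ioc]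
  simpa only [smul_eq_mul] using (convexOn_integral (convex_Icc 0 1)
    (ae_restrict_of_forall_mem measurableSet_Icc hconv) hint).smul
    (by norm_num : (0 : ℝ) ≤ 1 / 2)

/-- Lemma 2.5 of the paper. With `a ∈ C²((-L,L)) ∩ C⁰([-L,L])` even,
positive, `√a` convex, and `v ∈ C¹([-L,L])` strictly increasing with `v' > 0`,
`v(L) = -v(-L) = m`, the Dirichlet energy along the continuous odd rearrangement,
`h(t) = ½ ∫_{-m}^{m} a(ρ^t(λ)) / (ρ^t)'(λ) dλ` with `ρ^t(λ) = tρ(λ) - (1-t)ρ(-λ)`,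
is convex on `[0,1]`. -/
theorem stmt_11 (L m : ℝ) (hL : 0 < L) (hm : 0 < m) (a v ρ ρ' : ℝ → ℝ)
    (hac : ContinuousOn a (Icc (-L) L)) (haC2 : ContDiffOn ℝ 2 a (Ioo (-L) L))
    (haeven : ∀ x, a (-x) = a x) (hapos : ∀ x ∈ Icc (-L) L, 0 < a x)
    (hsqrt : ConvexOn ℝ (Icc (-L) L) (fun x => Real.sqrt (a x)))
    (hv : ContDiffOn ℝ 1 v (Icc (-L) L)) (hvmono : StrictMonoOn v (Icc (-L) L))
    (hv' : ∀ x ∈ Icc (-L) L, 0 < derivWithin v (Icc (-L) L) x)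
    (hvL : v (-L) = -m) (hvR : v L = m)
    (hρmaps : MapsTo ρ (Icc (-m) m) (Icc (-L) L))
    (hρv : ∀ x ∈ Icc (-L) L, ρ (v x) = x)
    (hvρ : ∀ lam ∈ Icc (-m) m, v (ρ lam) = lam)
    (hρ' : ∀ lam ∈ Icc (-m) m, HasDerivWithinAt ρ (ρ' lam) (Icc (-m) m) lam)
    (hρ'pos : ∀ lam ∈ Icc (-m) m, 0 < ρ' lam) :
    ConvexOn ℝ (Icc (0:ℝ) 1) (fun t =>
      (1/2) * ∫ lam in (-m)..m,
        a (t * ρ lam - (1 - t) * ρ (-lam)) / (t * ρ' lam + (1 - t) * ρ' (-lam))) :=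
  stmt_11_general L m hL hm a v ρ ρ' hac hapos hsqrt hv hv' hρmaps hvρ hρ' hρ'pos
end

section
/- Let $a, b$ be positive continuous even functions on $\mathbb{R}$, $G$ continuous even, $m \ge 0$, and $M > 0$ with $G \ge G(M) = 0$. For $0 \le t < L$, set $G_1 := \sup_{s \in (-m, \max\{m,M\})} G(s)$. Then $\inf_{v \in H^1_m((-L,L))} \mathcal{E}(v,(-L,L)) \le \frac{M^2 + m^2}{\int_t^L 1/a} + 2G_1 \int_t^L b$, where $\mathcal{E}(v,(-L,L)) = \int_{-L}^L \{\frac{1}{2}a v'^2 + b\,G(v)\}dx$ and $H^1_m((-L,L)) = \{v \in H^1((-L,L)) : v(-L) = -m, v(L) = m\}$. -/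
open Set intervalIntegral Filter Topology

/-!
Test the energy with the function that equals `M` on `[-t, t]` and, on `[t, L]` (resp.
`[-L, -t]`), runs from `M` to `m` (resp. to `-m`) linearly in the variable `∫ 1 / a`. On each
side this is the minimiser of the weighted Dirichlet energy, with energy `(M ∓ m)² / (2 ∫ₜᴸ 1/a)`,
and since `G M = 0` the potential term only sees `[t, L]` and `[-L, -t]`, where `G ≤ G₁`.

That function has a kink at `±t`, so `1 / a` is replaced by `f = ψ / a` for a continuous cutoff
`ψ` vanishing on `(-∞, t]` and equal to `1` on `[s, ∞)`. The resulting competitor is `C¹` with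
Dirichlet energy at most `(M² + m²) / ∫₀ᴸ f ≤ (M² + m²) / ∫ₛᴸ 1/a`; letting `s → t⁺` gives the
bound.
-/

theorem le_sSup_image_Ioo {G : ℝ → ℝ} (hG : Continuous G) {p q x : ℝ} (hpq : p < q)
    (hx : x ∈ Icc p q) : G x ≤ sSup (G '' Ioo p q) := by
  have hbdd : BddAbove (G '' Ioo p q) :=
    (isCompact_Icc.image hG).bddAbove.mono (image_mono Ioo_subset_Icc_self)
  have hx' : G x ∈ closure (G '' Ioo p q) := by
    rw [← closure_Ioo hpq.ne] at hx
    exact image_closure_subset_closure_image hG ⟨x, hx, rfl⟩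
  exact isClosed_Iic.closure_subset_iff.2 (fun y hy => le_csSup hbdd hy) hx'

section Primitive

variable {f : ℝ → ℝ} {t L : ℝ}

theorem primitive_eq_zero_of_le (ht : 0 ≤ t) (hft : ∀ y ≤ t, f y = 0) {x : ℝ}
    (hx : x ≤ t) : ∫ y in 0..x, f y = 0 := by
  rw [integral_congr (g := fun _ => 0) fun y hy => hft y ?_, integral_zero]
  exact (max_le ht hx).trans' hy.2

theorem integral_neg_eq_integral_zero (ht : 0 ≤ t) (hft : ∀ y ≤ t, f y = 0) (hL : 0 ≤ L)
    (hf : Continuous f) : ∫ y in (-L)..L, f y = ∫ y in 0..L, f y := by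
  rw [← integral_interval_sub_left (hf.intervalIntegrable 0 L) (hf.intervalIntegrable 0 (-L)),
    primitive_eq_zero_of_le ht hft (x := -L) (by linarith), sub_zero]

theorem monotone_primitive (hf : Continuous f) (h0 : ∀ y, 0 ≤ f y) :
    Monotone fun x => ∫ y in 0..x, f y := by
  intro x z hxz
  have := integral_nonneg (μ := MeasureTheory.volume) hxz fun y _ => h0 y
  rw [← integral_interval_sub_left (hf.intervalIntegrable 0 z) (hf.intervalIntegrable 0 x)] at this
  exact sub_nonneg.1 this

end Primitive

noncomputable def normalizedPrimitive (f : ℝ → ℝ) (L x : ℝ) : ℝ :=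
  (∫ y in 0..x, f y) / ∫ y in 0..L, f y

section NormalizedPrimitive

variable {f : ℝ → ℝ} {t L x : ℝ}

theorem normalizedPrimitive_of_le (ht : 0 ≤ t) (hft : ∀ y ≤ t, f y = 0) (hx : x ≤ t) :
    normalizedPrimitive f L x = 0 := by
  rw [normalizedPrimitive, primitive_eq_zero_of_le ht hft hx, zero_div]

theorem normalizedPrimitive_self (hJ : 0 < ∫ y in 0..L, f y) : normalizedPrimitive f L L = 1 :=
  div_self hJ.ne'

theorem normalizedPrimitive_mem_Icc (hf : Continuous f) (h0 : ∀ y, 0 ≤ f y) (ht : 0 ≤ t)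
    (hft : ∀ y ≤ t, f y = 0) (hJ : 0 < ∫ y in 0..L, f y) (hx : x ≤ L) :
    normalizedPrimitive f L x ∈ Icc 0 1 := by
  have hmono := monotone_primitive hf h0
  refine ⟨div_nonneg ?_ hJ.le, div_le_one_of_le₀ (hmono hx) hJ.le⟩
  rcases le_total x t with hxt | htx
  · exact (primitive_eq_zero_of_le ht hft hxt).ge
  · simpa using hmono (ht.trans htx)

theorem hasDerivAt_normalizedPrimitive (hf : Continuous f) (x : ℝ) :
    HasDerivAt (normalizedPrimitive f L) (f x / ∫ y in 0..L, f y) x :=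
  (hf.integral_hasStrictDerivAt 0 x).hasDerivAt.div_const _

end NormalizedPrimitive

noncomputable def competitor (f : ℝ → ℝ) (m M L x : ℝ) : ℝ :=
  M + (m - M) * normalizedPrimitive f L x - (m + M) * normalizedPrimitive f L (-x)

section Competitor

variable {f : ℝ → ℝ} {m M t L x : ℝ}

theorem competitor_self (ht : 0 ≤ t) (hft : ∀ y ≤ t, f y = 0) (hL : 0 ≤ L)
    (hJ : 0 < ∫ y in 0..L, f y) : competitor f m M L L = m := by
  rw [competitor, normalizedPrimitive_self hJ, normalizedPrimitive_of_le ht hft (by linarith)]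
  ring

theorem competitor_neg_self (ht : 0 ≤ t) (hft : ∀ y ≤ t, f y = 0) (hL : 0 ≤ L)
    (hJ : 0 < ∫ y in 0..L, f y) : competitor f m M L (-L) = -m := by
  rw [competitor, neg_neg, normalizedPrimitive_self hJ,
    normalizedPrimitive_of_le ht hft (by linarith)]
  ring

theorem competitor_of_mem_Icc (ht : 0 ≤ t) (hft : ∀ y ≤ t, f y = 0) (hx : x ∈ Icc (-t) t) :
    competitor f m M L x = M := by
  rw [competitor, normalizedPrimitive_of_le ht hft hx.2,
    normalizedPrimitive_of_le ht hft (by linarith [hx.1])]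
  ring

theorem competitor_mem_Icc (hf : Continuous f) (h0 : ∀ y, 0 ≤ f y) (ht : 0 ≤ t)
    (hft : ∀ y ≤ t, f y = 0) (hJ : 0 < ∫ y in 0..L, f y) (hm : 0 ≤ m) (hM : 0 ≤ M)
    (hx : x ∈ Icc (-L) L) : competitor f m M L x ∈ Icc (-m) (max m M) := by
  obtain ⟨hθ0, hθ1⟩ := normalizedPrimitive_mem_Icc hf h0 ht hft hJ hx.2
  obtain ⟨hθ0', hθ1'⟩ := normalizedPrimitive_mem_Icc hf h0 ht hft hJ (x := -x) (by linarith [hx.1])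
  rw [competitor]
  rcases le_total 0 x with hx0 | hx0
  · rw [normalizedPrimitive_of_le ht hft (x := -x) (by linarith)]
    refine ⟨by nlinarith, ?_⟩
    rcases le_total m M with hmM | hmM
    · exact le_max_of_le_right (by nlinarith)
    · exact le_max_of_le_left (by nlinarith)
  · rw [normalizedPrimitive_of_le ht hft (x := x) (by linarith)]
    exact ⟨by nlinarith, le_max_of_le_right (by nlinarith)⟩

theorem hasDerivAt_competitor (hf : Continuous f) (x : ℝ) :
    HasDerivAt (competitor f m M L)
      ((m - M) / (∫ y in 0..L, f y) * f x + (m + M) / (∫ y in 0..L, f y) * f (-x)) x := by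
  have hpos := hasDerivAt_normalizedPrimitive (L := L) hf x
  have hneg := (hasDerivAt_normalizedPrimitive (L := L) hf (-x)).comp x (hasDerivAt_neg x)
  exact (((hpos.const_mul (m - M)).const_add M).sub (hneg.const_mul (m + M))).congr_deriv
    (by ring)

end Competitor

theorem integral_mul_sq_add_comp_neg_le {a f : ℝ → ℝ} {t L : ℝ} (ha : Continuous a)
    (haeven : ∀ x, a (-x) = a x) (hf : Continuous f) (h0 : ∀ y, 0 ≤ f y)
    (haf : ∀ y, a y * f y ≤ 1) (ht : 0 ≤ t) (hft : ∀ y ≤ t, f y = 0) (hL : 0 ≤ L) (α β : ℝ) :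
    ∫ x in (-L)..L, a x * (α * f x + β * f (-x)) ^ 2 ≤ (α ^ 2 + β ^ 2) * ∫ x in 0..L, f x := by
  have hdisj : ∀ x, f x * f (-x) = 0 := by
    intro x
    rcases le_total x 0 with hx | hx
    · rw [hft x (by linarith), zero_mul]
    · rw [hft (-x) (by linarith), mul_zero]
  have hsq : ∀ y, a y * f y ^ 2 ≤ f y := fun y => by nlinarith [h0 y, haf y]
  have hpoint : ∀ x, a x * (α * f x + β * f (-x)) ^ 2 ≤ α ^ 2 * f x + β ^ 2 * f (-x) := by
    intro x
    have hexpand : a x * (α * f x + β * f (-x)) ^ 2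
        = α ^ 2 * (a x * f x ^ 2) + β ^ 2 * (a (-x) * f (-x) ^ 2) := by
      rw [haeven]
      linear_combination (2 * α * β * a x) * hdisj x
    rw [hexpand]
    exact add_le_add (mul_le_mul_of_nonneg_left (hsq x) (sq_nonneg α))
      (mul_le_mul_of_nonneg_left (hsq (-x)) (sq_nonneg β))
  have hfneg : Continuous fun x => f (-x) := hf.comp continuous_neg
  have hlhs : Continuous fun x => a x * (α * f x + β * f (-x)) ^ 2 := by fun_prop
  have hrhs : Continuous fun x => α ^ 2 * f x + β ^ 2 * f (-x) := by fun_prop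
  calc ∫ x in (-L)..L, a x * (α * f x + β * f (-x)) ^ 2
      ≤ ∫ x in (-L)..L, (α ^ 2 * f x + β ^ 2 * f (-x)) :=
        integral_mono_on (by linarith) (hlhs.intervalIntegrable _ _)
          (hrhs.intervalIntegrable _ _) fun x _ => hpoint x
    _ = (α ^ 2 + β ^ 2) * ∫ x in 0..L, f x := by
        rw [integral_add ((hf.intervalIntegrable _ _).const_mul _)
            ((hfneg.intervalIntegrable _ _).const_mul _),
          integral_const_mul, integral_const_mul, integral_comp_neg, neg_neg,
          integral_neg_eq_integral_zero ht hft hL hf]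
        ring

theorem integral_le_two_mul_integral_of_eqOn_zero {h b : ℝ → ℝ} {c t L : ℝ} (hh : Continuous h)
    (hb : Continuous b) (hbeven : ∀ x, b (-x) = b x) (ht : 0 ≤ t) (htL : t ≤ L)
    (hzero : ∀ x ∈ Icc (-t) t, h x = 0) (hle : ∀ x ∈ Icc (-L) L, h x ≤ c * b x) :
    ∫ x in (-L)..L, h x ≤ 2 * c * ∫ x in t..L, b x := by
  have hsplit : ∫ x in (-L)..L, h x
      = (∫ x in (-L)..(-t), h x) + (∫ x in (-t)..t, h x) + ∫ x in t..L, h x := by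
    rw [integral_add_adjacent_intervals (hh.intervalIntegrable _ _) (hh.intervalIntegrable _ _),
      integral_add_adjacent_intervals (hh.intervalIntegrable _ _) (hh.intervalIntegrable _ _)]
  have hmid : ∫ x in (-t)..t, h x = 0 := by
    rw [integral_congr (g := fun _ => 0) fun x hx => hzero x ?_, integral_zero]
    rwa [uIcc_of_le (by linarith)] at hx
  have hleft : ∫ x in (-L)..(-t), h x ≤ c * ∫ x in t..L, b x := by
    calc ∫ x in (-L)..(-t), h x ≤ ∫ x in (-L)..(-t), c * b x :=
          integral_mono_on (by linarith) (hh.intervalIntegrable _ _)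
            ((continuous_const.mul hb).intervalIntegrable _ _)
            fun x hx => hle x ⟨hx.1, by linarith [hx.2]⟩
      _ = c * ∫ x in t..L, b x := by
          rw [integral_const_mul, ← integral_comp_neg]
          simp only [hbeven]
  have hright : ∫ x in t..L, h x ≤ c * ∫ x in t..L, b x := by
    rw [← integral_const_mul]
    exact integral_mono_on htL (hh.intervalIntegrable _ _)
      ((continuous_const.mul hb).intervalIntegrable _ _)
      fun x hx => hle x ⟨by linarith [hx.1], hx.2⟩
  linarith

theorem integral_le_integral_zero_of_nonneg {f : ℝ → ℝ} (hf : Continuous f) (h0 : ∀ y, 0 ≤ f y)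
    {s : ℝ} (hs : 0 ≤ s) (L : ℝ) : ∫ y in s..L, f y ≤ ∫ y in 0..L, f y := by
  rw [← integral_interval_sub_left (hf.intervalIntegrable 0 L) (hf.intervalIntegrable 0 s)]
  linarith [integral_nonneg (μ := MeasureTheory.volume) hs fun y _ => h0 y]

theorem exists_cutoff_div {a : ℝ → ℝ} (ha : Continuous a) (hapos : ∀ x, 0 < a x) {t s : ℝ}
    (hts : t < s) :
    ∃ f : ℝ → ℝ, Continuous f ∧ (∀ y, 0 ≤ f y) ∧ (∀ y, a y * f y ≤ 1) ∧
      (∀ y ≤ t, f y = 0) ∧ ∀ y, s ≤ y → f y = 1 / a y := by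
  obtain ⟨ψ, hψt, hψs, hψ01⟩ := exists_continuous_zero_one_of_isClosed isClosed_Iic isClosed_Ici
    (Iic_disjoint_Ici.2 hts.not_ge)
  refine ⟨fun y => ψ y / a y, ψ.continuous.div ha fun y => (hapos y).ne',
    fun y => div_nonneg (hψ01 y).1 (hapos y).le, fun y => ?_, fun y hy => ?_, fun y hy => ?_⟩
  · rw [mul_div_cancel₀ _ (hapos y).ne']
    exact (hψ01 y).2
  · simp [hψt (mem_Iic.2 hy)]
  · simp [hψs (mem_Ici.2 hy)]

def admissibleEnergies (a b G : ℝ → ℝ) (m L : ℝ) : Set ℝ :=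
  {E : ℝ | ∃ v v' : ℝ → ℝ,
    (∀ x ∈ Icc (-L) L, HasDerivWithinAt v (v' x) (Icc (-L) L) x) ∧
    ContinuousOn v' (Icc (-L) L) ∧ v (-L) = -m ∧ v L = m ∧
    E = ∫ x in (-L)..L, ((1/2) * a x * v' x ^ 2 + b x * G (v x))}

theorem sInf_admissibleEnergies_le {a b G v v' : ℝ → ℝ} {m L c : ℝ} (ha : ∀ x, 0 ≤ a x)
    (hb : ∀ x, 0 ≤ b x) (hG : ∀ s, 0 ≤ G s) (hL : 0 ≤ L) (hv : ∀ x, HasDerivAt v (v' x) x)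
    (hv' : Continuous v') (hvl : v (-L) = -m) (hvr : v L = m)
    (hE : ∫ x in (-L)..L, ((1/2) * a x * v' x ^ 2 + b x * G (v x)) ≤ c) :
    sInf (admissibleEnergies a b G m L) ≤ c := by
  have hbdd : BddBelow (admissibleEnergies a b G m L) := by
    refine ⟨0, ?_⟩
    rintro _ ⟨w, w', -, -, -, -, rfl⟩
    refine integral_nonneg (by linarith) fun x _ => ?_
    have := ha x
    have := mul_nonneg (hb x) (hG (w x))
    positivity
  exact (csInf_le hbdd ⟨v, v', fun x _ => (hv x).hasDerivWithinAt, hv'.continuousOn, hvl, hvr,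
    rfl⟩).trans hE

theorem sInf_admissibleEnergies_le_of_cutoff {a b G f : ℝ → ℝ} {m M t L : ℝ}
    (ha : Continuous a) (hb : Continuous b) (hG : Continuous G) (ha0 : ∀ x, 0 ≤ a x)
    (hb0 : ∀ x, 0 ≤ b x) (haeven : ∀ x, a (-x) = a x) (hbeven : ∀ x, b (-x) = b x)
    (hGge : ∀ s, 0 ≤ G s) (hGM : G M = 0) (hm : 0 ≤ m) (hM : 0 < M) (ht : 0 ≤ t) (htL : t ≤ L)
    (hf : Continuous f) (h0 : ∀ y, 0 ≤ f y) (haf : ∀ y, a y * f y ≤ 1)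
    (hft : ∀ y ≤ t, f y = 0) (hJ : 0 < ∫ y in 0..L, f y) :
    sInf (admissibleEnergies a b G m L) ≤
      (M ^ 2 + m ^ 2) / (∫ y in 0..L, f y)
        + 2 * sSup (G '' Ioo (-m) (max m M)) * ∫ x in t..L, b x := by
  set J := ∫ y in 0..L, f y
  set v := competitor f m M L
  set v' := fun x => (m - M) / J * f x + (m + M) / J * f (-x)
  have hv : ∀ x, HasDerivAt v (v' x) x := hasDerivAt_competitor hf
  have hvc : Continuous v := continuous_iff_continuousAt.2 fun x => (hv x).continuousAt
  have hv'c : Continuous v' := by fun_prop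
  have hkc : Continuous fun x => (1/2) * a x * v' x ^ 2 := by fun_prop
  have hpc : Continuous fun x => b x * G (v x) := by fun_prop
  have hL : 0 ≤ L := ht.trans htL
  refine sInf_admissibleEnergies_le ha0 hb0 hGge hL hv
    hv'c (competitor_neg_self ht hft hL hJ) (competitor_self ht hft hL hJ) ?_
  have hkinetic : ∫ x in (-L)..L, (1/2) * a x * v' x ^ 2 ≤ (M ^ 2 + m ^ 2) / J := by
    simp only [mul_assoc, integral_const_mul]
    calc 1 / 2 * ∫ x in (-L)..L, a x * v' x ^ 2
        ≤ 1 / 2 * (((m - M) / J) ^ 2 + ((m + M) / J) ^ 2) * J := by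
          rw [mul_assoc]
          exact mul_le_mul_of_nonneg_left
            (integral_mul_sq_add_comp_neg_le ha haeven hf h0 haf ht hft hL _ _) (by norm_num)
      _ = (M ^ 2 + m ^ 2) / J := by
          field_simp
          ring
  have hpotential : ∫ x in (-L)..L, b x * G (v x)
      ≤ 2 * sSup (G '' Ioo (-m) (max m M)) * ∫ x in t..L, b x := by
    refine integral_le_two_mul_integral_of_eqOn_zero hpc hb hbeven ht htL (fun x hx => ?_)
      fun x hx => ?_
    · rw [show v x = M from competitor_of_mem_Icc ht hft hx, hGM, mul_zero]
    rw [mul_comm _ (b x)]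
    refine mul_le_mul_of_nonneg_left (le_sSup_image_Ioo hG ?_ ?_) (hb0 x)
    · exact (neg_nonpos.2 hm).trans_lt (hM.trans_le (le_max_right m M))
    · exact competitor_mem_Icc hf h0 ht hft hJ hm hM.le hx
  rw [integral_add (hkc.intervalIntegrable _ _) (hpc.intervalIntegrable _ _)]
  linarith

theorem stmt_14_general (a b G : ℝ → ℝ) (m M L t : ℝ) (hm : 0 ≤ m) (hM : 0 < M)
    (ht : 0 ≤ t) (htL : t < L)
    (hac : Continuous a) (hbc : Continuous b) (hGc : Continuous G)
    (hapos : ∀ x, 0 < a x) (hbpos : ∀ x, 0 < b x)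
    (haeven : ∀ x, a (-x) = a x) (hbeven : ∀ x, b (-x) = b x)
    (hGge : ∀ s, 0 ≤ G s) (hGM : G M = 0) :
    sInf {E : ℝ | ∃ v v' : ℝ → ℝ,
        (∀ x ∈ Icc (-L) L, HasDerivWithinAt v (v' x) (Icc (-L) L) x) ∧
        ContinuousOn v' (Icc (-L) L) ∧ v (-L) = -m ∧ v L = m ∧
        E = ∫ x in (-L)..L, ((1/2) * a x * v' x ^ 2 + b x * G (v x))} ≤
      (M ^ 2 + m ^ 2) / (∫ x in t..L, 1 / a x)
        + 2 * sSup (G '' Ioo (-m) (max m M)) * ∫ x in t..L, b x := by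
  set C := 2 * sSup (G '' Ioo (-m) (max m M)) * ∫ x in t..L, b x
  have hinv : Continuous fun x => 1 / a x := continuous_const.div hac fun x => (hapos x).ne'
  have hinv_pos : ∀ {p q : ℝ}, p < q → 0 < ∫ x in p..q, 1 / a x := fun hpq =>
    intervalIntegral_pos_of_pos_on (hinv.intervalIntegrable _ _)
      (fun x _ => one_div_pos.2 (hapos x)) hpq
  have hbound : ∀ s ∈ Ioo t L, sInf (admissibleEnergies a b G m L)
      ≤ (M ^ 2 + m ^ 2) / (∫ x in s..L, 1 / a x) + C := by
    rintro s ⟨hts, hsL⟩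
    obtain ⟨f, hf, h0, haf, hft, hfs⟩ := exists_cutoff_div hac hapos hts
    have hJ : ∫ x in s..L, 1 / a x ≤ ∫ y in 0..L, f y := by
      rw [← integral_congr fun y hy => hfs y (uIcc_of_le hsL.le ▸ hy).1]
      exact integral_le_integral_zero_of_nonneg hf h0 (ht.trans hts.le) L
    refine (sInf_admissibleEnergies_le_of_cutoff hac hbc hGc
      (fun x => (hapos x).le) (fun x => (hbpos x).le) haeven hbeven hGge hGM
      hm hM ht htL.le hf h0 haf hft ((hinv_pos hsL).trans_le hJ)).trans ?_
    gcongr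
    exact hinv_pos hsL
  have hcont : Continuous fun s => ∫ x in s..L, 1 / a x :=
    (continuous_primitive (fun _ _ => hinv.intervalIntegrable _ _) L).neg.congr
      fun s => (integral_symm L s).symm
  have hlim : Tendsto (fun s => (M ^ 2 + m ^ 2) / (∫ x in s..L, 1 / a x) + C) (𝓝[>] t)
      (𝓝 ((M ^ 2 + m ^ 2) / (∫ x in t..L, 1 / a x) + C)) :=
    ((tendsto_const_nhds.div (hcont.tendsto t) (hinv_pos htL).ne').add_const C).mono_left
      nhdsWithin_le_nhds
  exact ge_of_tendsto hlim (eventually_of_mem (Ioo_mem_nhdsGT htL) hbound)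

/-- Proposition 5.2. Upper bound on the minimal energy over
`H¹_m((-L,L))`: for `0 ≤ t < L`,
`inf 𝓔 ≤ (M² + m²)/∫ₜᴸ 1/a + 2 G₁ ∫ₜᴸ b`, where `G₁ = sup_{(-m, max{m,M})} G`. -/
theorem stmt_14 (a b G : ℝ → ℝ) (m M L t : ℝ) (hm : 0 ≤ m) (hM : 0 < M)
    (ht : 0 ≤ t) (htL : t < L)
    (hac : Continuous a) (hbc : Continuous b) (hGc : Continuous G)
    (hapos : ∀ x, 0 < a x) (hbpos : ∀ x, 0 < b x)
    (haeven : ∀ x, a (-x) = a x) (hbeven : ∀ x, b (-x) = b x)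
    (hGeven : ∀ s, G (-s) = G s)
    (hGge : ∀ s, 0 ≤ G s) (hGM : G M = 0) :
    sInf {E : ℝ | ∃ v v' : ℝ → ℝ,
        (∀ x ∈ Icc (-L) L, HasDerivWithinAt v (v' x) (Icc (-L) L) x) ∧
        ContinuousOn v' (Icc (-L) L) ∧ v (-L) = -m ∧ v L = m ∧
        E = ∫ x in (-L)..L, ((1/2) * a x * v' x ^ 2 + b x * G (v x))} ≤
      (M ^ 2 + m ^ 2) / (∫ x in t..L, 1 / a x)
        + 2 * sSup (G '' Ioo (-m) (max m M)) * ∫ x in t..L, b x :=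
  stmt_14_general a b G m M L t hm hM ht htL hac hbc hGc hapos hbpos haeven hbeven hGge hGM
end
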